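/- arXiv:0711.2346 — 3 statements merged into one kernel-verified Lean document; each statement's English description precedes it below -/
import Mathlib

section
/- With the inclusion-exclusion relation C*(n, h) = ∑_{j=0}^{h} (-1)^j C(n - 2j, j) C(n - 3j, h - j) between two integer-valued arrays C* and C (where C(n,h) = 0 unless 0 ≤ h ≤ n/2), the bivariate formal power series satisfy ∑_{n ≥ 0} ∑_{h ≤ n/2} C*(n, h) w^h x^n = (1/(1 + w x³)) · ∑_{n ≥ 0} ∑_{h ≤ n/2} C(n, h) w^h (x/(1 + w x³))^n, as formal power series in w and x. -/
/-!
Write `u = 1 + w x³`. Each summand on the right is `C(n,h) w^h x^n u^{-(n+1)}`, and substituting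
`-w x³` into `(1 - X)^{-(n+1)} = ∑_j binom(n+j, j) X^j` gives
`u^{-(n+1)} = ∑_j (-1)^j binom(n+j, j) w^j x^{3j}`. Hence the coefficient of `w^h x^n` on the
right is `∑_j (-1)^j binom(n-2j, j) C(n-3j, h-j)`, the term `j` coming from `(n-3j, h-j)`,
which is `C*(n,h)`. Both `C` and `C*` vanish for `h > n/2`, so truncating the sums at
`n ≤ d 0`, `h ≤ n/2` loses nothing.
-/

open MvPowerSeries Finset

namespace MvPowerSeries

variable {σ k : Type*} [Field k]

theorem inv_one_add_pow_eq_subst {a : MvPowerSeries σ k} (ha : constantCoeff a = 0) (m : ℕ) :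
    (1 + a)⁻¹ ^ (m + 1) = (PowerSeries.mk fun n ↦ ((m + n).choose m : k)).subst (-a) := by
  have h := congrArg (PowerSeries.substAlgHom (a := -a) (.of_constantCoeff_zero (by simp [ha])))
    (PowerSeries.mk_add_choose_mul_one_sub_pow_eq_one (S := k) (d := m))
  rw [map_mul, map_pow, map_sub, map_one, PowerSeries.substAlgHom_X, sub_neg_eq_add,
    PowerSeries.coe_substAlgHom, mul_comm] at h
  have hinv : (1 + a)⁻¹ ^ (m + 1) * (1 + a) ^ (m + 1) = 1 := by
    rw [← mul_pow, MvPowerSeries.inv_mul_cancel _ (by simp [ha]), one_pow]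
  exact left_inv_eq_right_inv hinv h

theorem constantCoeff_monomial_of_ne_zero {R : Type*} [CommSemiring R] {μ : σ →₀ ℕ}
    (hμ : μ ≠ 0) (c : R) :
    constantCoeff (monomial μ c) = 0 := by
  classical
  rw [← coeff_zero_eq_constantCoeff_apply, coeff_monomial, if_neg hμ.symm]

theorem coeff_inv_one_add_monomial_pow [DecidableEq σ] {μ : σ →₀ ℕ} {i : σ} (hμ : μ i = 1)
    (m : ℕ) (e : σ →₀ ℕ) :
    coeff e ((1 + monomial μ (1 : k))⁻¹ ^ (m + 1)) =
      if e = e i • μ then (-1) ^ e i * ((m + e i).choose (e i) : k) else 0 := by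
  have hμ0 : μ ≠ 0 := fun h ↦ by simp [h] at hμ
  have hv := constantCoeff_monomial_of_ne_zero hμ0 (1 : k)
  have hpow (n : ℕ) : (-monomial μ (1 : k)) ^ n = monomial (n • μ) ((-1) ^ n) := by
    rw [← map_neg, monomial_pow]
  rw [inv_one_add_pow_eq_subst hv, PowerSeries.coeff_subst (.of_constantCoeff_zero (by simp [hv])),
    finsum_eq_single _ (e i)]
  · simp only [hpow, coeff_monomial, PowerSeries.coeff_mk, smul_eq_mul]
    rw [Nat.choose_symm_add]
    split_ifs <;> ring
  · intro n hn
    rw [hpow, coeff_monomial, if_neg, smul_zero]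
    rintro rfl
    simp [hμ] at hn

end MvPowerSeries

theorem sum_range_neg_one_pow_mul_choose_mul_eq_zero {R : Type*} [CommRing R]
    {f : ℕ → ℕ → R} (hf : ∀ n h : ℕ, n / 2 < h → f n h = 0) {n h : ℕ} (hnh : n / 2 < h) :
    ∑ j ∈ range (h + 1), (-1) ^ j * ((n - 2 * j).choose j : R) * f (n - 3 * j) (h - j) = 0 := by
  refine sum_eq_zero fun j hj ↦ ?_
  rw [mem_range] at hj
  by_cases h3j : 3 * j ≤ n
  · rw [hf _ _ (by omega), mul_zero]
  · rw [Nat.choose_eq_zero_of_lt (by omega), Nat.cast_zero, mul_zero, zero_mul]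

theorem sum_sigma_ite_choose_eq_sum_range_choose {R : Type*} [CommRing R]
    {f : ℕ → ℕ → R} (hf : ∀ n h : ℕ, n / 2 < h → f n h = 0) {N H M : ℕ} (hN : N ≤ M) :
    ∑ x ∈ (range (M + 1)).sigma (fun n ↦ range (n / 2 + 1)),
        (if x.2 ≤ H ∧ x.1 + 3 * (H - x.2) = N then
          f x.1 x.2 * ((-1) ^ (H - x.2) * ((x.1 + (H - x.2)).choose (H - x.2) : R)) else 0) =
      ∑ j ∈ range (H + 1), (-1) ^ j * ((N - 2 * j).choose j : R) * f (N - 3 * j) (H - j) := by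
  have hsupp (j : ℕ) (hne : (-1) ^ j * ((N - 2 * j).choose j : R) * f (N - 3 * j) (H - j) ≠ 0) :
      3 * j ≤ N ∧ H - j ≤ (N - 3 * j) / 2 := by
    constructor <;> by_contra hc <;> apply hne
    · rw [Nat.choose_eq_zero_of_lt (by omega), Nat.cast_zero, mul_zero, zero_mul]
    · rw [hf _ _ (by omega), mul_zero]
  symm
  refine sum_bij_ne_zero (fun j _ _ ↦ ⟨N - 3 * j, H - j⟩) ?_ ?_ ?_ ?_
  · intro j _ hne
    have := hsupp j hne
    simp only [mem_sigma, mem_range]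
    omega
  · intro j₁ hj₁ _ j₂ hj₂ _ heq
    simp only [Sigma.mk.injEq, heq_eq_eq] at heq
    rw [mem_range] at hj₁ hj₂
    omega
  · rintro ⟨n, h⟩ _ hne
    obtain ⟨hh, hn⟩ : h ≤ H ∧ n + 3 * (H - h) = N := by
      by_contra hc
      exact hne (if_neg hc)
    rw [if_pos ⟨hh, hn⟩] at hne
    refine ⟨H - h, mem_range.2 (by omega), ?_, ?_⟩
    · rw [show N - 2 * (H - h) = n + (H - h) by omega, show N - 3 * (H - h) = n by omega,
        Nat.sub_sub_self hh]
      contrapose! hne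
      linear_combination hne
    · simp only [Sigma.mk.injEq, heq_eq_eq]
      omega
  · intro j hj hne
    have := hsupp j hne
    rw [mem_range] at hj
    dsimp only
    rw [if_pos (by omega), Nat.sub_sub_self (by omega), show N - 3 * j + j = N - 2 * j by omega]
    ring

section Bivariate

theorem X_one_mul_X_zero_pow_three {R : Type*} [CommSemiring R] :
    (X 1 * X 0 ^ 3 : MvPowerSeries (Fin 2) R) =
      monomial (Finsupp.single 0 3 + Finsupp.single 1 1) 1 := by
  rw [X_pow_eq, X, monomial_mul_monomial, mul_one, add_comm]

theorem C_mul_X_one_pow_mul_X_zero_pow {R : Type*} [CommSemiring R] (c : R) (n h : ℕ) :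
    (C c * X 1 ^ h * X 0 ^ n : MvPowerSeries (Fin 2) R) =
      monomial (Finsupp.single 0 n + Finsupp.single 1 h) c := by
  rw [X_pow_eq, X_pow_eq, ← monomial_zero_eq_C_apply, monomial_mul_monomial,
    monomial_mul_monomial, mul_one, mul_one, zero_add, add_comm]

variable {k : Type*} [Field k]

theorem coeff_inv_mul_C_mul_X_pow_mul_pow (c : k) (n h : ℕ) (d : Fin 2 →₀ ℕ) :
    coeff d ((1 + X 1 * X 0 ^ 3)⁻¹ *
        (C c * X 1 ^ h * (X 0 * (1 + X 1 * X 0 ^ 3)⁻¹) ^ n) : MvPowerSeries (Fin 2) k) =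
      if h ≤ d 1 ∧ n + 3 * (d 1 - h) = d 0 then
        c * ((-1) ^ (d 1 - h) * ((n + (d 1 - h)).choose (d 1 - h) : k)) else 0 := by
  have hsplit : ((1 + X 1 * X 0 ^ 3)⁻¹ *
        (C c * X 1 ^ h * (X 0 * (1 + X 1 * X 0 ^ 3)⁻¹) ^ n) : MvPowerSeries (Fin 2) k) =
      monomial (Finsupp.single 0 n + Finsupp.single 1 h) c *
        (1 + monomial (Finsupp.single 0 3 + Finsupp.single 1 1) 1)⁻¹ ^ (n + 1) := by
    rw [mul_pow, ← C_mul_X_one_pow_mul_X_zero_pow, X_one_mul_X_zero_pow_three]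
    ring
  rw [hsplit, coeff_monomial_mul, coeff_inv_one_add_monomial_pow (i := 1) (by simp)]
  simp only [Finsupp.le_def, Finsupp.ext_iff, Fin.forall_fin_two, Finsupp.coe_tsub,
    Finsupp.coe_add, Finsupp.coe_smul, Pi.add_apply, Pi.sub_apply, Pi.smul_apply, smul_eq_mul,
    Finsupp.single_eq_same, Finsupp.single_eq_of_ne zero_ne_one.symm,
    Finsupp.single_eq_of_ne one_ne_zero.symm, add_zero, zero_add, mul_one, and_true, mul_ite,
    mul_zero]
  split_ifs <;> first | rfl | omega

theorem coeff_sum_C_mul_X_one_pow_mul_X_zero_pow {f : ℕ → ℕ → k}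
    (hf : ∀ n h : ℕ, n / 2 < h → f n h = 0) {M : ℕ} {d : Fin 2 →₀ ℕ} (hd : d 0 ≤ M) :
    coeff d (∑ n ∈ range (M + 1), ∑ h ∈ range (n / 2 + 1),
        C (f n h) * X 1 ^ h * X 0 ^ n : MvPowerSeries (Fin 2) k) = f (d 0) (d 1) := by
  have hd_eq (x : Σ _ : ℕ, ℕ) :
      d = Finsupp.single 0 x.1 + Finsupp.single 1 x.2 ↔ ⟨d 0, d 1⟩ = x := by
    rcases x with ⟨n, h⟩
    simp [Finsupp.ext_iff, Fin.forall_fin_two]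
  simp only [C_mul_X_one_pow_mul_X_zero_pow, map_sum, coeff_monomial]
  rw [sum_sigma', sum_congr rfl fun x _ ↦ if_congr (hd_eq x) rfl rfl, sum_ite_eq]
  split_ifs with hmem
  · rfl
  · rw [hf]
    simp only [mem_sigma, mem_range, not_and] at hmem
    omega

theorem coeff_inv_mul_sum_C_mul_X_one_pow_mul_pow {f : ℕ → ℕ → k}
    (hf : ∀ n h : ℕ, n / 2 < h → f n h = 0) {M : ℕ} {d : Fin 2 →₀ ℕ} (hd : d 0 ≤ M) :
    coeff d ((1 + X 1 * X 0 ^ 3)⁻¹ * ∑ n ∈ range (M + 1), ∑ h ∈ range (n / 2 + 1),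
        C (f n h) * X 1 ^ h * (X 0 * (1 + X 1 * X 0 ^ 3)⁻¹) ^ n : MvPowerSeries (Fin 2) k) =
      ∑ j ∈ range (d 1 + 1), (-1) ^ j * ((d 0 - 2 * j).choose j : k) *
        f (d 0 - 3 * j) (d 1 - j) := by
  simp only [mul_sum, map_sum, coeff_inv_mul_C_mul_X_pow_mul_pow]
  rw [sum_sigma', sum_sigma_ite_choose_eq_sum_range_choose hf hd]

end Bivariate

/-- Transfer of the inclusion–exclusion relation
`C*(n,h) = ∑_{j=0}^h (-1)^j C(n-2j,j) C(n-3j,h-j)` to bivariate formal power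
series in `x = X 0`, `w = X 1`:
`∑_n ∑_{h ≤ n/2} C*(n,h) w^h x^n
   = (1/(1+w x³)) ∑_n ∑_{h ≤ n/2} C(n,h) w^h (x/(1+w x³))^n`.
Stated coefficient-wise; since every summand indexed by `n` has `x`-order `≥ n`,
only terms `n ≤ d 0` contribute to the coefficient at `d`, so the truncated
sums have exactly the coefficients of the full series. -/
theorem stmt8 (Cs Cc : ℕ → ℕ → ℤ)
    (hCc : ∀ n h : ℕ, n / 2 < h → Cc n h = 0)
    (hCs : ∀ n h : ℕ,
      Cs n h = ∑ j ∈ Finset.range (h + 1),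
        (-1 : ℤ) ^ j * ((n - 2 * j).choose j : ℤ) * Cc (n - 3 * j) (h - j)) :
    ∀ d : Fin 2 →₀ ℕ,
      MvPowerSeries.coeff (R := ℚ) d
        (∑ n ∈ Finset.range (d 0 + 1), ∑ h ∈ Finset.range (n / 2 + 1),
          MvPowerSeries.C (σ := Fin 2) (R := ℚ) ((Cs n h : ℚ)) *
            (MvPowerSeries.X 1) ^ h * (MvPowerSeries.X 0) ^ n)
      = MvPowerSeries.coeff (R := ℚ) d
        ((1 + MvPowerSeries.X 1 * (MvPowerSeries.X (0 : Fin 2)) ^ 3)⁻¹ *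
          ∑ n ∈ Finset.range (d 0 + 1), ∑ h ∈ Finset.range (n / 2 + 1),
            MvPowerSeries.C (σ := Fin 2) (R := ℚ) ((Cc n h : ℚ)) *
              (MvPowerSeries.X 1) ^ h *
              (MvPowerSeries.X 0 *
                (1 + MvPowerSeries.X 1 * (MvPowerSeries.X (0 : Fin 2)) ^ 3)⁻¹) ^ n) := by
  intro d
  have hCc' (n h : ℕ) (hnh : n / 2 < h) : (Cc n h : ℚ) = 0 := by
    rw [hCc n h hnh, Int.cast_zero]
  have hCs' (n h : ℕ) (hnh : n / 2 < h) : (Cs n h : ℚ) = 0 := by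
    rw [hCs, sum_range_neg_one_pow_mul_choose_mul_eq_zero hCc hnh, Int.cast_zero]
  rw [coeff_sum_C_mul_X_one_pow_mul_X_zero_pow hCs' le_rfl,
    coeff_inv_mul_sum_C_mul_X_one_pow_mul_pow hCc' le_rfl, hCs]
  push_cast
  rfl
end

section
/- For every n ≥ 1, the map sending a k-noncrossing RNA structure δ with arc-length ≥ 3 and stack-length ≥ σ (σ ≥ 2) with h arcs on [n] to the pair (c(δ), (a_1,...,a_{h-b})) — where c(δ) collapses each maximal stack ((i-ℓ, j+ℓ),...,(i,j)) to the single arc (i,j) and relabels, b is the total number of removed arcs, and a_t is the number of arcs removed from the t-th stack (left to right) plus (σ-1) — is a bijection onto the disjoint union over b from σ-1 to h-1 of C*_k(n-2b, h-b) × {(a_1,...,a_{h-b}) : ∑ a_t = b, each a_t ≥ σ-1}, where C*_k(m, g) is the set of k-noncrossing core structures on [m] with g arcs, arc-length ≥ 2, containing no arc (i, i+2) with i+1 isolated. -/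
open Finset

/-- A diagram on `[n] = {1,…,n}`: a partial matching given by arcs `(i,j)` with
`1 ≤ i < j ≤ n`, every vertex having degree at most one. -/
def IsDiagram (n : ℕ) (M : Finset (ℕ × ℕ)) : Prop :=
  (∀ p ∈ M, 1 ≤ p.1 ∧ p.1 < p.2 ∧ p.2 ≤ n) ∧
  (∀ p ∈ M, ∀ q ∈ M, p ≠ q → p.1 ≠ q.1 ∧ p.1 ≠ q.2 ∧ p.2 ≠ q.1 ∧ p.2 ≠ q.2)

/-- `M` contains `k` mutually crossing arcs `(i_1,j_1),…,(i_k,j_k)` with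
`i_1 < … < i_k < j_1 < … < j_k`. -/
def MutuallyCrossing (k : ℕ) (M : Finset (ℕ × ℕ)) : Prop :=
  ∃ f : Fin k → ℕ × ℕ, (∀ t, f t ∈ M) ∧
    StrictMono (fun t => (f t).1) ∧ StrictMono (fun t => (f t).2) ∧
    ∀ s t : Fin k, (f s).1 < (f t).2

/-- The set of isolated (degree-0) vertices of the diagram `M` on `[n]`. -/
def IsolatedVerts (n : ℕ) (M : Finset (ℕ × ℕ)) : Finset ℕ :=
  (Finset.Icc 1 n).filter fun v => ∀ p ∈ M, v ≠ p.1 ∧ v ≠ p.2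

/-- The innermost arcs of `δ`: arcs kept by the collapse map (one per stack). -/
def Kept (δ : Finset (ℕ × ℕ)) : Finset (ℕ × ℕ) :=
  δ.filter fun p => (p.1 + 1, p.2 - 1) ∉ δ

/-- The vertices of `[n]` surviving the collapse: all vertices that are not
endpoints of a removed (non-innermost) arc. -/
def KeptVerts (n : ℕ) (δ : Finset (ℕ × ℕ)) : Finset ℕ :=
  (Finset.Icc 1 n).filter fun v => ∀ p ∈ δ, (v = p.1 ∨ v = p.2) → p ∈ Kept δ

/-- Relabelling of the surviving vertices, left to right in increasing order. -/
def rankOf (n : ℕ) (δ : Finset (ℕ × ℕ)) (v : ℕ) : ℕ :=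
  ((KeptVerts n δ).filter (· ≤ v)).card

/-- The collapse map `c`: each maximal stack `((i-ℓ,j+ℓ),…,(i,j))` is collapsed
to its innermost arc `(i,j)`; then the surviving vertices are relabelled. -/
def collapse (n : ℕ) (δ : Finset (ℕ × ℕ)) : Finset (ℕ × ℕ) :=
  (Kept δ).image fun p => (rankOf n δ p.1, rankOf n δ p.2)

/-- The number of arcs removed from the stack of an innermost arc `p = (i,j)`:
the length of the maximal run `(i,j),(i-1,j+1),(i-2,j+2),…` inside `δ`, minus one. -/
def stackMult (n : ℕ) (δ : Finset (ℕ × ℕ)) (p : ℕ × ℕ) : ℕ :=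
  ((Finset.range (n + 1)).filter fun t => ∀ s ≤ t, (p.1 - s, p.2 + s) ∈ δ).card - 1

/-- The multiplicity attached to an arc `a` of the core `c(δ)`: the number of
arcs removed from the stack of `δ` collapsing onto `a` (and `0` if `a` is not
an arc of `c(δ)`). -/
def multFun (n : ℕ) (δ : Finset (ℕ × ℕ)) (a : ℕ × ℕ) : ℕ :=
  ∑ p ∈ (Kept δ).filter (fun p => (rankOf n δ p.1, rankOf n δ p.2) = a),
    stackMult n δ p

/-- `C*_k(m,g)`: `k`-noncrossing core structures on `[m]` with `g` arcs,
arc-length ≥ 2, no two parallel arcs `(i,j),(i+1,j-1)`, and no arc `(i,i+2)`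
with `i+1` isolated. -/
def IsCoreStar (k m g : ℕ) (M : Finset (ℕ × ℕ)) : Prop :=
  IsDiagram m M ∧ ¬ MutuallyCrossing k M ∧ M.card = g ∧
    (∀ p ∈ M, p.1 + 2 ≤ p.2) ∧ (∀ p ∈ M, (p.1 + 1, p.2 - 1) ∉ M) ∧
    (∀ p ∈ M, p.2 = p.1 + 2 → p.1 + 1 ∉ IsolatedVerts m M)

/-!
Collapsing is inverted by an expansion. Given a core `M` with multiplicities `m`, every vertex `v`
moves to `shift M m v = v + ∑ p, m p * ([p.1 ≤ v] + [p.2 < v])`, which makes room for `m p` new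
vertices just left of `p.1` and just right of `p.2`, and every arc `p` is regrown into the stack
`(shift p.1 - s, shift p.2 + s)`, `s ≤ m p`.

Every arc of a diagram lies in the stack of a unique innermost arc, so expanding
`(collapse n δ, multFun n δ)` gives back `δ` as soon as `shift` undoes the relabelling `rankOf` on
surviving vertices. That is a count: left of a surviving vertex `v`, exactly `stackMult q` vertices
were removed next to each endpoint of an innermost arc `q` that lies left of `v`. The core
conditions on `collapse n δ` are then read off from `shift`: an arc `(i, i+1)`, an arc `(i, i+2)`
over an isolated vertex, or an arc with a parallel arc inside would expand to an arc of `δ` of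
length `1`, of length `2`, or to an arc directly inside an innermost arc of `δ`. Conversely, the
innermost arcs of an expanded core are the images of its arcs (the core has no parallel arcs), the
same count shows that `rankOf` undoes `shift`, and the stack sizes are recovered because both
decompositions of the expansion into stacks have the same number of arcs.
-/

namespace IsDiagram

variable {n : ℕ} {M : Finset (ℕ × ℕ)} {p q : ℕ × ℕ}

theorem eq_of_fst_eq (hM : IsDiagram n M) (hp : p ∈ M) (hq : q ∈ M) (h : p.1 = q.1) :
    p = q := by
  by_contra hne
  exact (hM.2 p hp q hq hne).1 h

theorem eq_of_snd_eq (hM : IsDiagram n M) (hp : p ∈ M) (hq : q ∈ M) (h : p.2 = q.2) :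
    p = q := by
  by_contra hne
  exact (hM.2 p hp q hq hne).2.2.2 h

theorem fst_ne_snd (hM : IsDiagram n M) (hp : p ∈ M) (hq : q ∈ M) : p.1 ≠ q.2 := by
  by_cases hpq : p = q
  · subst hpq
    exact (hM.1 p hp).2.1.ne
  · exact (hM.2 p hp q hq hpq).2.1

theorem sum_filter_fst_eq (hM : IsDiagram n M) (hp : p ∈ M) (m : ℕ × ℕ → ℕ) :
    ∑ q ∈ M with q.1 = p.1, m q = m p :=
  sum_eq_single_of_mem p (mem_filter.2 ⟨hp, rfl⟩) fun _ hq hqp =>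
    absurd (hM.eq_of_fst_eq (mem_filter.1 hq).1 hp (mem_filter.1 hq).2) hqp

theorem sum_filter_snd_eq (hM : IsDiagram n M) (hp : p ∈ M) (m : ℕ × ℕ → ℕ) :
    ∑ q ∈ M with q.2 = p.2, m q = m p :=
  sum_eq_single_of_mem p (mem_filter.2 ⟨hp, rfl⟩) fun _ hq hqp =>
    absurd (hM.eq_of_snd_eq (mem_filter.1 hq).1 hp (mem_filter.1 hq).2) hqp

theorem two_le (hM : IsDiagram n M) (hne : M.Nonempty) : 2 ≤ n := by
  obtain ⟨p, hp⟩ := hne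
  have := hM.1 p hp
  omega

end IsDiagram

namespace StackCollapse

section Expansion

variable {nc v : ℕ} {M : Finset (ℕ × ℕ)} {m : ℕ × ℕ → ℕ} {p q : ℕ × ℕ} {s s' : ℕ}

def shift (M : Finset (ℕ × ℕ)) (m : ℕ × ℕ → ℕ) (v : ℕ) : ℕ :=
  v + ∑ p ∈ M, m p * ((if p.1 ≤ v then 1 else 0) + (if p.2 < v then 1 else 0))

def expand (M : Finset (ℕ × ℕ)) (m : ℕ × ℕ → ℕ) : Finset (ℕ × ℕ) :=
  M.biUnion fun p => (range (m p + 1)).image fun s => (shift M m p.1 - s, shift M m p.2 + s)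

theorem mem_expand {x : ℕ × ℕ} :
    x ∈ expand M m ↔ ∃ p ∈ M, ∃ s ≤ m p, (shift M m p.1 - s, shift M m p.2 + s) = x := by
  simp only [expand, mem_biUnion, mem_image, mem_range, Nat.lt_succ_iff]

theorem shift_succ (v : ℕ) :
    shift M m (v + 1) =
      shift M m v + 1 + ∑ p ∈ M with p.1 = v + 1, m p + ∑ p ∈ M with p.2 = v, m p := by
  have h : ∀ p ∈ M, m p * ((if p.1 ≤ v + 1 then 1 else 0) + (if p.2 < v + 1 then 1 else 0)) =
      m p * ((if p.1 ≤ v then 1 else 0) + (if p.2 < v then 1 else 0)) +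
        (if p.1 = v + 1 then m p else 0) + (if p.2 = v then m p else 0) := by
    intro p _
    split_ifs <;> omega
  simp only [shift, sum_filter, sum_congr rfl h, sum_add_distrib]
  ring

theorem sum_filter_eq_zero {P : ℕ × ℕ → Prop} [DecidablePred P] (h : ∀ q ∈ M, ¬ P q) :
    ∑ q ∈ M with P q, m q = 0 := by
  rw [filter_false_of_mem h, sum_empty]

theorem shift_succ_eq (h1 : ∀ q ∈ M, q.1 ≠ v + 1) (h2 : ∀ q ∈ M, q.2 ≠ v) :
    shift M m (v + 1) = shift M m v + 1 := by
  rw [shift_succ, sum_filter_eq_zero h1, sum_filter_eq_zero h2]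

theorem strictMono_shift : StrictMono (shift M m) :=
  strictMono_nat_of_lt_succ fun v => by rw [shift_succ]; omega

theorem shift_pair_injective :
    Function.Injective fun p : ℕ × ℕ => (shift M m p.1, shift M m p.2) := fun _ _ h =>
  Prod.ext (strictMono_shift.injective (congrArg Prod.fst h))
    (strictMono_shift.injective (congrArg Prod.snd h))

theorem shift_eq_of_forall_snd_lt (hM : IsDiagram nc M) (hv : ∀ p ∈ M, p.2 < v) :
    shift M m v = v + 2 * ∑ p ∈ M, m p := by
  have h : ∀ p ∈ M, m p * ((if p.1 ≤ v then 1 else 0) + (if p.2 < v then 1 else 0)) = 2 * m p := by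
    intro p hp
    have := (hM.1 p hp).2.1
    rw [if_pos (by have := hv p hp; omega), if_pos (hv p hp)]
    ring
  rw [shift, sum_congr rfl h, mul_sum]

theorem shift_pred_add_lt (hM : IsDiagram nc M) (hp : p ∈ M) :
    shift M m (p.1 - 1) + m p < shift M m p.1 := by
  have h := shift_succ (M := M) (m := m) (p.1 - 1)
  rw [Nat.sub_add_cancel (hM.1 p hp).1, hM.sum_filter_fst_eq hp] at h
  omega

theorem shift_add_lt_shift_succ (hM : IsDiagram nc M) (hp : p ∈ M) :
    shift M m p.2 + m p < shift M m (p.2 + 1) := by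
  rw [shift_succ, hM.sum_filter_snd_eq hp]
  omega

theorem shift_add_add_lt (hM : IsDiagram nc M) (hp : p ∈ M) (hq : q ∈ M) (h : q.2 < p.1) :
    shift M m q.2 + m q + m p < shift M m p.1 := by
  rcases (show q.2 + 1 ≤ p.1 from h).eq_or_lt with h' | h'
  · have := shift_succ (M := M) (m := m) q.2
    rw [h', hM.sum_filter_fst_eq hp, hM.sum_filter_snd_eq hq] at this
    omega
  · have h1 := shift_add_lt_shift_succ (m := m) hM hq
    have h2 := shift_pred_add_lt (m := m) hM hp
    have h3 := strictMono_shift.monotone (f := shift M m) (show q.2 + 1 ≤ p.1 - 1 by omega)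
    omega

theorem fst_le_of_shift_sub_le (hM : IsDiagram nc M) (hp : p ∈ M) (hs : s ≤ m p)
    (h : shift M m p.1 - s ≤ shift M m q.1 - s') : p.1 ≤ q.1 := by
  by_contra! hlt
  have h1 := shift_pred_add_lt (m := m) hM hp
  have h2 := strictMono_shift.monotone (f := shift M m) (show q.1 ≤ p.1 - 1 by omega)
  omega

theorem snd_le_of_shift_add_le (hM : IsDiagram nc M) (hq : q ∈ M) (hs' : s' ≤ m q)
    (h : shift M m p.2 + s ≤ shift M m q.2 + s') : p.2 ≤ q.2 := by
  by_contra! hlt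
  have h1 := shift_add_lt_shift_succ (m := m) hM hq
  have h2 := strictMono_shift.monotone (f := shift M m) (show q.2 + 1 ≤ p.2 by omega)
  omega

theorem fst_lt_snd_of_shift_sub_le (hM : IsDiagram nc M) (hp : p ∈ M) (hq : q ∈ M)
    (hs : s ≤ m p) (hs' : s' ≤ m q) (h : shift M m p.1 - s ≤ shift M m q.2 + s') :
    p.1 < q.2 := by
  by_contra! hle
  have := shift_add_add_lt (m := m) hM hp hq (lt_of_le_of_ne hle (hM.fst_ne_snd hp hq).symm)
  omega

theorem snd_lt_fst_of_shift_add_le (hM : IsDiagram nc M) (hp : p ∈ M) (hq : q ∈ M)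
    (h : shift M m q.2 + s' ≤ shift M m p.1 - s) : q.2 < p.1 := by
  by_contra! hle
  have := strictMono_shift (M := M) (m := m) (lt_of_le_of_ne hle (hM.fst_ne_snd hp hq))
  omega

theorem eq_of_shift_sub_eq (hM : IsDiagram nc M) (hp : p ∈ M) (hq : q ∈ M) (hs : s ≤ m p)
    (hs' : s' ≤ m q) (h : shift M m p.1 - s = shift M m q.1 - s') : p = q ∧ s = s' := by
  have hpq := hM.eq_of_fst_eq hp hq <| le_antisymm (fst_le_of_shift_sub_le hM hp hs h.le)
    (fst_le_of_shift_sub_le hM hq hs' h.ge)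
  subst hpq
  have := shift_pred_add_lt (m := m) hM hp
  exact ⟨rfl, by omega⟩

theorem eq_of_shift_add_eq (hM : IsDiagram nc M) (hp : p ∈ M) (hq : q ∈ M) (hs : s ≤ m p)
    (hs' : s' ≤ m q) (h : shift M m p.2 + s = shift M m q.2 + s') : p = q ∧ s = s' := by
  have hpq := hM.eq_of_snd_eq hp hq <| le_antisymm (snd_le_of_shift_add_le hM hq hs' h.le)
    (snd_le_of_shift_add_le hM hp hs h.ge)
  subst hpq
  exact ⟨rfl, by omega⟩

theorem shift_sub_ne_shift_add (hM : IsDiagram nc M) (hp : p ∈ M) (hq : q ∈ M)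
    (hs : s ≤ m p) (hs' : s' ≤ m q) : shift M m p.1 - s ≠ shift M m q.2 + s' := fun h =>
  (fst_lt_snd_of_shift_sub_le hM hp hq hs hs' h.le).not_gt
    (snd_lt_fst_of_shift_add_le hM hp hq h.ge)

theorem isDiagram_expand (hM : IsDiagram nc M) :
    IsDiagram (nc + 2 * ∑ p ∈ M, m p) (expand M m) := by
  constructor
  · rintro x hx
    obtain ⟨p, hp, s, hs, rfl⟩ := mem_expand.1 hx
    have h1 := shift_pred_add_lt (m := m) hM hp
    have h2 := strictMono_shift (M := M) (m := m) (hM.1 p hp).2.1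
    have h3 := shift_add_lt_shift_succ (m := m) hM hp
    have h4 := strictMono_shift.monotone (f := shift M m) (show p.2 + 1 ≤ nc + 1 by
      have := (hM.1 p hp).2.2; omega)
    rw [shift_eq_of_forall_snd_lt hM fun q hq => Nat.lt_succ_of_le (hM.1 q hq).2.2] at h4
    refine ⟨?_, ?_, ?_⟩ <;> dsimp only <;> omega
  · rintro x hx y hy hxy
    obtain ⟨p, hp, s, hs, rfl⟩ := mem_expand.1 hx
    obtain ⟨q, hq, s', hs', rfl⟩ := mem_expand.1 hy
    have hne : ¬ (p = q ∧ s = s') := by rintro ⟨rfl, rfl⟩; exact hxy rfl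
    exact ⟨fun h => hne (eq_of_shift_sub_eq hM hp hq hs hs' h),
      shift_sub_ne_shift_add hM hp hq hs hs',
      fun h => shift_sub_ne_shift_add hM hq hp hs' hs h.symm,
      fun h => hne (eq_of_shift_add_eq hM hp hq hs hs' h)⟩

theorem card_expand (hM : IsDiagram nc M) : #(expand M m) = #M + ∑ p ∈ M, m p := by
  rw [expand, card_biUnion]
  · have hinj : ∀ p ∈ M, Set.InjOn (fun s => (shift M m p.1 - s, shift M m p.2 + s))
        (range (m p + 1)) := fun p _ s _ s' _ h => by
      have := congrArg Prod.snd h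
      dsimp only at this
      omega
    rw [sum_congr rfl fun p hp => card_image_of_injOn (hinj p hp)]
    simp only [card_range, sum_add_distrib, sum_const, smul_eq_mul, mul_one]
    ring
  · intro p hp q hq hpq
    simp only [Function.onFun, disjoint_left, mem_image, mem_range, Nat.lt_succ_iff]
    rintro x ⟨s, hs, rfl⟩ ⟨s', hs', h⟩
    exact hpq (eq_of_shift_sub_eq hM hq hp hs' hs (congrArg Prod.fst h)).1.symm

theorem lt_of_shift_lt (hM : IsDiagram nc M) (hp : p ∈ M) (hq : q ∈ M) (hs : s ≤ m p)
    (hs' : s' ≤ m q) (h1 : shift M m p.1 - s < shift M m q.1 - s')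
    (h2 : shift M m p.2 + s < shift M m q.2 + s') : p.1 < q.1 ∧ p.2 < q.2 := by
  have hpq : p ≠ q := by
    rintro rfl
    have := shift_pred_add_lt (m := m) hM hp
    omega
  exact ⟨lt_of_le_of_ne (fst_le_of_shift_sub_le hM hp hs h1.le)
      fun h => hpq (hM.eq_of_fst_eq hp hq h),
    lt_of_le_of_ne (snd_le_of_shift_add_le hM hq hs' h2.le)
      fun h => hpq (hM.eq_of_snd_eq hp hq h)⟩

theorem not_mutuallyCrossing_expand {k : ℕ} (hM : IsDiagram nc M)
    (hMC : ¬ MutuallyCrossing k M) : ¬ MutuallyCrossing k (expand M m) := by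
  rintro ⟨f, hf, h1, h2, h3⟩
  choose p hp s hs hfs using fun t => mem_expand.1 (hf t)
  have key : ∀ t u, t < u → (p t).1 < (p u).1 ∧ (p t).2 < (p u).2 := fun t u htu => by
    have e1 : (f t).1 < (f u).1 := h1 htu
    have e2 : (f t).2 < (f u).2 := h2 htu
    rw [← hfs t, ← hfs u] at e1 e2
    exact lt_of_shift_lt hM (hp t) (hp u) (hs t) (hs u) e1 e2
  refine hMC ⟨p, hp, fun t u htu => (key t u htu).1, fun t u htu => (key t u htu).2,
    fun t u => ?_⟩
  have e3 := h3 t u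
  rw [← hfs t, ← hfs u] at e3
  exact fst_lt_snd_of_shift_sub_le hM (hp t) (hp u) (hs t) (hs u) e3.le

theorem expand_arc_length (hM : IsDiagram nc M) (hlen : ∀ p ∈ M, p.1 + 2 ≤ p.2)
    (hiso : ∀ p ∈ M, p.2 = p.1 + 2 → p.1 + 1 ∉ IsolatedVerts nc M) (hm : ∀ p ∈ M, 1 ≤ m p) :
    ∀ x ∈ expand M m, x.1 + 3 ≤ x.2 := by
  rintro x hx
  obtain ⟨p, hp, s, hs, rfl⟩ := mem_expand.1 hx
  suffices shift M m p.1 + 3 ≤ shift M m p.2 by dsimp only; omega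
  have hmono := strictMono_shift (M := M) (m := m)
  rcases (hlen p hp).eq_or_lt' with h2 | h3
  · have hnc := (hM.1 p hp).2.2
    have : ∃ q ∈ M, p.1 + 1 = q.1 ∨ p.1 + 1 = q.2 := by
      by_contra! h
      exact hiso p hp h2 (mem_filter.2 ⟨mem_Icc.2 ⟨by omega, by omega⟩, h⟩)
    obtain ⟨q, hq, hq1 | hq2⟩ := this
    · have h1 := shift_pred_add_lt (m := m) hM hq
      rw [← hq1, Nat.add_sub_cancel] at h1
      have := hmono (show p.1 + 1 < p.2 by omega)
      have := hm q hq
      omega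
    · have h1 := shift_add_lt_shift_succ (m := m) hM hq
      rw [← hq2, show p.1 + 1 + 1 = p.2 by omega] at h1
      have := hmono (show p.1 < p.1 + 1 by omega)
      have := hm q hq
      omega
  · have := hmono.add_le_nat 3 p.1
    have := hmono.monotone (show 3 + p.1 ≤ p.2 by omega)
    omega

theorem expand_stack {σ : ℕ} (hM : IsDiagram nc M) (hσ : 0 < σ) (hm : ∀ p ∈ M, σ - 1 ≤ m p) :
    ∀ x ∈ expand M m, ∃ q : ℕ × ℕ, (∀ t < σ, (q.1 + t, q.2 - t) ∈ expand M m) ∧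
      ∃ t < σ, x = (q.1 + t, q.2 - t) := by
  rintro x hx
  obtain ⟨p, hp, s, hs, rfl⟩ := mem_expand.1 hx
  -- `x` lies in the run of `σ` arcs of the stack of `p` whose outermost arc has depth `top`
  set top := min (m p) (s + σ - 1)
  have := hm p hp
  have := shift_pred_add_lt (m := m) hM hp
  refine ⟨(shift M m p.1 - top, shift M m p.2 + top), fun t ht => ?_, top - s, by omega, ?_⟩
  · exact mem_expand.2 ⟨p, hp, top - t, by omega, by ext <;> dsimp only <;> omega⟩
  · ext <;> dsimp only <;> omega

theorem shift_snd_eq_of_snd_eq_succ (hM : IsDiagram nc M) (hp : p ∈ M) (h : p.2 = p.1 + 1) :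
    shift M m p.2 = shift M m p.1 + 1 := by
  rw [h]
  exact shift_succ_eq (fun q hq hq1 => hM.fst_ne_snd hq hp (hq1.trans h.symm))
    fun q hq hq2 => hM.fst_ne_snd hp hq hq2.symm

theorem shift_snd_eq_of_isolated (hM : IsDiagram nc M) (hp : p ∈ M) (h : p.2 = p.1 + 2)
    (hiso : p.1 + 1 ∈ IsolatedVerts nc M) : shift M m p.2 = shift M m p.1 + 2 := by
  have hiso := (mem_filter.1 hiso).2
  have h1 : shift M m (p.1 + 1) = shift M m p.1 + 1 :=
    shift_succ_eq (fun q hq => (hiso q hq).1.symm) fun q hq hq2 => hM.fst_ne_snd hp hq hq2.symm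
  have h2 : shift M m (p.1 + 1 + 1) = shift M m (p.1 + 1) + 1 :=
    shift_succ_eq (fun q hq hq1 => hM.fst_ne_snd hq hp (by omega)) fun q hq => (hiso q hq).2.symm
  rw [h, show p.1 + 2 = p.1 + 1 + 1 by omega, h2, h1]

theorem inner_mem_expand (hM : IsDiagram nc M) (hp : p ∈ M) (hp' : (p.1 + 1, p.2 - 1) ∈ M) :
    (shift M m p.1 + 1, shift M m p.2 - 1) ∈ expand M m := by
  have hb := hM.1 p hp
  have h1 := shift_succ (M := M) (m := m) p.1
  have h2 := shift_succ (M := M) (m := m) (p.2 - 1)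
  have e1 := hM.sum_filter_fst_eq hp' m
  have e2 := hM.sum_filter_snd_eq hp' m
  dsimp only at e1 e2
  rw [e1, sum_filter_eq_zero fun q hq => (hM.fst_ne_snd hp hq).symm] at h1
  rw [e2, Nat.sub_add_cancel (by omega : 1 ≤ p.2),
    sum_filter_eq_zero fun q hq => hM.fst_ne_snd hq hp] at h2
  refine mem_expand.2 ⟨_, hp', m (p.1 + 1, p.2 - 1), le_rfl, ?_⟩
  ext <;> dsimp only <;> omega

theorem kept_expand (hM : IsDiagram nc M) (hpar : ∀ p ∈ M, (p.1 + 1, p.2 - 1) ∉ M) :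
    Kept (expand M m) = M.image fun p => (shift M m p.1, shift M m p.2) := by
  ext x
  simp only [Kept, mem_filter, mem_image]
  constructor
  · rintro ⟨hx, hinner⟩
    obtain ⟨p, hp, s, hs, rfl⟩ := mem_expand.1 hx
    refine ⟨p, hp, ?_⟩
    obtain rfl | hs0 := Nat.eq_zero_or_pos s
    · simp
    · have := shift_pred_add_lt (m := m) hM hp
      exact absurd (mem_expand.2 ⟨p, hp, s - 1, by omega, by ext <;> dsimp only <;> omega⟩)
        hinner
  · rintro ⟨p, hp, rfl⟩
    refine ⟨mem_expand.2 ⟨p, hp, 0, Nat.zero_le _, by simp⟩, fun h => ?_⟩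
    obtain ⟨q, hq, s', hs', he⟩ := mem_expand.1 h
    have h1 : shift M m q.1 - s' = shift M m p.1 + 1 := congrArg Prod.fst he
    have h2 : shift M m q.2 + s' = shift M m p.2 - 1 := congrArg Prod.snd he
    have hmono := strictMono_shift (M := M) (m := m)
    have hlt := hmono (hM.1 p hp).2.1
    have hpq : p ≠ q := by rintro rfl; omega
    have hq1 : q.1 = p.1 + 1 := by
      have hle := fst_le_of_shift_sub_le (m := m) (s := 0) hM hp (Nat.zero_le _) (q := q) (s' := s')
        (by omega)
      have hne : p.1 ≠ q.1 := fun h => hpq (hM.eq_of_fst_eq hp hq h)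
      have := shift_pred_add_lt (m := m) hM hq
      have := hmono.le_iff_le.1 (show shift M m (q.1 - 1) ≤ shift M m p.1 by omega)
      omega
    have hq2 : q.2 = p.2 - 1 := by
      have hle := snd_le_of_shift_add_le (m := m) (p := q) (s := s') hM hp (Nat.zero_le _)
        (by omega)
      have hne : q.2 ≠ p.2 := fun h => hpq (hM.eq_of_snd_eq hq hp h).symm
      have := shift_add_lt_shift_succ (m := m) hM hq
      have := hmono.le_iff_le.1 (show shift M m p.2 ≤ shift M m (q.2 + 1) by omega)
      omega
    exact hpar p hp (by rwa [← hq1, ← hq2])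

theorem shift_pair_mem_kept_expand (hM : IsDiagram nc M) (hpar : ∀ p ∈ M, (p.1 + 1, p.2 - 1) ∉ M)
    (hp : p ∈ M) : (shift M m p.1, shift M m p.2) ∈ Kept (expand M m) := by
  rw [kept_expand hM hpar]
  exact mem_image_of_mem _ hp

end Expansion

section Collapse

variable {n σ : ℕ} {δ : Finset (ℕ × ℕ)} {a p q q' : ℕ × ℕ} {s s' t u v : ℕ}

theorem mem_kept : p ∈ Kept δ ↔ p ∈ δ ∧ (p.1 + 1, p.2 - 1) ∉ δ := mem_filter

theorem stack_mem (hq : q ∈ δ) (hs : s ≤ stackMult n δ q) :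
    (q.1 - s, q.2 + s) ∈ δ := by
  set F := (range (n + 1)).filter fun t => ∀ s ≤ t, (q.1 - s, q.2 + s) ∈ δ
  have hF : stackMult n δ q = #F - 1 := rfl
  have h0 : 0 ∈ F := mem_filter.2 ⟨by simp, fun s hs => by simpa [Nat.le_zero.1 hs] using hq⟩
  have hcard : #F ≤ F.max' ⟨0, h0⟩ + 1 := by
    simpa using card_le_card fun t ht => mem_range.2 (Nat.lt_succ_of_le (F.le_max' t ht))
  exact (mem_filter.1 (F.max'_mem ⟨0, h0⟩)).2 s (by omega)

theorem le_stackMult (hδ : IsDiagram n δ) (h : ∀ s ≤ t, (q.1 - s, q.2 + s) ∈ δ) :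
    t ≤ stackMult n δ q := by
  have ht := hδ.1 _ (h t le_rfl)
  have hq := hδ.1 _ (h 0 (Nat.zero_le _))
  have hsub : range (t + 1) ⊆ (range (n + 1)).filter fun t => ∀ s ≤ t, (q.1 - s, q.2 + s) ∈ δ :=
    fun u hu => by
      rw [mem_range] at hu
      exact mem_filter.2 ⟨mem_range.2 (by dsimp only at ht hq; omega), fun s hs => h s (by omega)⟩
  have := card_le_card hsub
  rw [card_range] at this
  unfold stackMult
  omega

theorem exists_kept_of_mem (hδ : IsDiagram n δ) (hp : p ∈ δ) :
    ∃ q ∈ Kept δ, ∃ s ≤ stackMult n δ q, (q.1 - s, q.2 + s) = p := by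
  have hex : ∃ d, (p.1 + (d + 1), p.2 - (d + 1)) ∉ δ :=
    ⟨p.2, fun h => by have := (hδ.1 _ h).2.1; dsimp only at this; omega⟩
  obtain ⟨d, hout, hmin⟩ : ∃ d, (p.1 + (d + 1), p.2 - (d + 1)) ∉ δ ∧
      ∀ j < d, (p.1 + (j + 1), p.2 - (j + 1)) ∈ δ :=
    ⟨Nat.find hex, Nat.find_spec hex, fun j hj => not_not.1 (Nat.find_min hex hj)⟩
  have hin : ∀ j ≤ d, (p.1 + j, p.2 - j) ∈ δ := by
    rintro (_ | j) hj
    · simpa using hp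
    · exact hmin j (by omega)
  have hd := (hδ.1 _ (hin d le_rfl)).2.1
  dsimp only at hd
  refine ⟨(p.1 + d, p.2 - d), mem_kept.2 ⟨hin d le_rfl, ?_⟩, d, le_stackMult hδ fun s hs => ?_, ?_⟩
  · convert hout using 2
    ext <;> dsimp only <;> omega
  · convert hin (d - s) (by omega) using 1
    ext <;> dsimp only <;> omega
  · ext <;> dsimp only <;> omega

theorem eq_of_stack_eq (hδ : IsDiagram n δ) (hq : q ∈ Kept δ) (hq' : q' ∈ Kept δ)
    (hs : s ≤ stackMult n δ q) (hs' : s' ≤ stackMult n δ q')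
    (h : (q.1 - s, q.2 + s) = (q'.1 - s', q'.2 + s')) : q = q' ∧ s = s' := by
  have key : ∀ {q q' : ℕ × ℕ} {s s' : ℕ}, q ∈ Kept δ → q' ∈ Kept δ → s' ≤ stackMult n δ q' →
      (q.1 - s, q.2 + s) = (q'.1 - s', q'.2 + s') → ¬ s < s' := by
    intro q q' s s' hq hq' hs' h hlt
    -- the stack of `q'` would contain the arc at depth `s' - s - 1`, directly inside `q`
    have hb := (hδ.1 _ (stack_mem (mem_kept.1 hq').1 hs')).1
    rw [Prod.ext_iff] at h
    dsimp only at h hb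
    refine (mem_kept.1 hq).2 ?_
    convert stack_mem (mem_kept.1 hq').1 (show s' - (s + 1) ≤ stackMult n δ q' by omega)
      using 2 <;> omega
  have hss : s = s' := by
    have := key hq hq' hs' h
    have := key hq' hq hs h.symm
    omega
  subst hss
  refine ⟨hδ.eq_of_snd_eq (mem_kept.1 hq).1 (mem_kept.1 hq').1 ?_, rfl⟩
  have := congrArg Prod.snd h
  dsimp only at this
  omega

theorem stack_mem_kept_iff (hδ : IsDiagram n δ) (hq : q ∈ Kept δ) (hs : s ≤ stackMult n δ q) :
    (q.1 - s, q.2 + s) ∈ Kept δ ↔ s = 0 := by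
  refine ⟨fun h => ?_, fun h => by simpa [h] using hq⟩
  exact (eq_of_stack_eq hδ h hq (Nat.zero_le _) hs (by simp)).2.symm

theorem card_filter_eq_sum (hδ : IsDiagram n δ) (P : ℕ × ℕ → Prop) [DecidablePred P] :
    #(δ.filter P) = ∑ q ∈ Kept δ,
      #((range (stackMult n δ q + 1)).filter fun s => P (q.1 - s, q.2 + s)) := by
  have hδ_eq : δ = (Kept δ).biUnion fun q =>
      (range (stackMult n δ q + 1)).image fun s => (q.1 - s, q.2 + s) := by
    ext x
    simp only [mem_biUnion, mem_image, mem_range, Nat.lt_succ_iff]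
    refine ⟨exists_kept_of_mem hδ, ?_⟩
    rintro ⟨q, hq, s, hs, rfl⟩
    exact stack_mem (mem_kept.1 hq).1 hs
  conv_lhs => rw [hδ_eq]
  rw [filter_biUnion, card_biUnion]
  · refine sum_congr rfl fun q _ => ?_
    rw [filter_image, card_image_of_injOn fun s _ s' _ h => ?_]
    have := congrArg Prod.snd h
    dsimp only at this
    omega
  · intro q hq q' hq' hne
    simp only [Function.onFun, disjoint_left, mem_filter, mem_image, mem_range, Nat.lt_succ_iff]
    rintro x ⟨⟨s, hs, rfl⟩, -⟩ ⟨⟨s', hs', h⟩, -⟩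
    exact hne (eq_of_stack_eq hδ hq hq' hs hs' h.symm).1

theorem card_filter_not_kept (hδ : IsDiagram n δ) (Q : ℕ × ℕ → Prop) [DecidablePred Q] :
    #(δ.filter fun p => p ∉ Kept δ ∧ Q p) = ∑ q ∈ Kept δ,
      #((range (stackMult n δ q + 1)).filter fun s => s ≠ 0 ∧ Q (q.1 - s, q.2 + s)) := by
  rw [card_filter_eq_sum hδ]
  refine sum_congr rfl fun q hq => congrArg card (filter_congr fun s hs => ?_)
  rw [stack_mem_kept_iff hδ hq (Nat.lt_succ_iff.1 (mem_range.1 hs))]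

theorem card_filter_ne_zero_range {μ : ℕ} {R : ℕ → Prop} [DecidablePred R] (c : Prop)
    [Decidable c] (h : ∀ s, 1 ≤ s → s ≤ μ → (R s ↔ c)) :
    #((range (μ + 1)).filter fun s => s ≠ 0 ∧ R s) = if c then μ else 0 := by
  split_ifs with hc
  · rw [show (range (μ + 1)).filter (fun s => s ≠ 0 ∧ R s) = Icc 1 μ from ?_, Nat.card_Icc,
      Nat.add_sub_cancel]
    ext s
    simp only [mem_filter, mem_range, mem_Icc]
    refine ⟨fun ⟨h1, h2, _⟩ => ⟨by omega, by omega⟩, fun ⟨h1, h2⟩ => ⟨by omega, by omega, ?_⟩⟩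
    exact (h s h1 h2).2 hc
  · rw [card_eq_zero, filter_eq_empty_iff]
    rintro s hs ⟨h0, hR⟩
    exact hc ((h s (by omega) (by rw [mem_range] at hs; omega)).1 hR)

theorem card_eq_card_kept_add_sum (hδ : IsDiagram n δ) :
    #δ = #(Kept δ) + ∑ q ∈ Kept δ, stackMult n δ q := by
  have hsplit := card_filter_add_card_filter_not (s := δ) (· ∈ Kept δ)
  rw [filter_mem_eq_inter, inter_eq_right.2 (show Kept δ ⊆ δ from filter_subset _ _)] at hsplit
  have hrem := card_filter_not_kept hδ fun _ => True
  rw [sum_congr rfl fun q _ => card_filter_ne_zero_range True fun _ _ _ => Iff.rfl] at hrem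
  simp only [and_true, if_true] at hrem
  omega

theorem mem_keptVerts :
    v ∈ KeptVerts n δ ↔ v ∈ Icc 1 n ∧ ∀ p ∈ δ, (v = p.1 ∨ v = p.2) → p ∈ Kept δ := mem_filter

theorem fst_mem_keptVerts (hδ : IsDiagram n δ) (hq : q ∈ Kept δ) : q.1 ∈ KeptVerts n δ := by
  have hqδ := (mem_kept.1 hq).1
  have hb := hδ.1 q hqδ
  refine mem_keptVerts.2 ⟨mem_Icc.2 ⟨hb.1, by omega⟩, fun p hp h => ?_⟩
  rcases h with h | h
  · rwa [hδ.eq_of_fst_eq hp hqδ h.symm]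
  · exact absurd h (hδ.fst_ne_snd hqδ hp)

theorem snd_mem_keptVerts (hδ : IsDiagram n δ) (hq : q ∈ Kept δ) : q.2 ∈ KeptVerts n δ := by
  have hqδ := (mem_kept.1 hq).1
  have hb := hδ.1 q hqδ
  refine mem_keptVerts.2 ⟨mem_Icc.2 ⟨by omega, hb.2.2⟩, fun p hp h => ?_⟩
  rcases h with h | h
  · exact absurd h.symm (hδ.fst_ne_snd hp hqδ)
  · rwa [hδ.eq_of_snd_eq hp hqδ h.symm]

theorem stack_not_mem_keptVerts (hδ : IsDiagram n δ) (hq : q ∈ Kept δ) (hs0 : s ≠ 0)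
    (hs : s ≤ stackMult n δ q) : q.1 - s ∉ KeptVerts n δ ∧ q.2 + s ∉ KeptVerts n δ := by
  have hmem := stack_mem (mem_kept.1 hq).1 hs
  have hnot := hs0 ∘ (stack_mem_kept_iff hδ hq hs).1
  exact ⟨fun h => hnot ((mem_keptVerts.1 h).2 _ hmem (Or.inl rfl)),
    fun h => hnot ((mem_keptVerts.1 h).2 _ hmem (Or.inr rfl))⟩

theorem card_filter_not_mem_keptVerts (hδ : IsDiagram n δ) (hv : v ≤ n) :
    #((Icc 1 v).filter (· ∉ KeptVerts n δ)) =
      #(δ.filter fun p => p ∉ Kept δ ∧ p.1 ≤ v) + #(δ.filter fun p => p ∉ Kept δ ∧ p.2 ≤ v) := by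
  rw [← card_image_of_injOn fun p hp q hq h => hδ.eq_of_fst_eq (mem_filter.1 hp).1
      (mem_filter.1 hq).1 h,
    ← card_image_of_injOn fun p hp q hq h => hδ.eq_of_snd_eq (mem_filter.1 hp).1
      (mem_filter.1 hq).1 h,
    ← card_union_of_disjoint]
  · congr 1
    ext x
    simp only [mem_filter, mem_Icc, mem_union, mem_image, mem_keptVerts, not_and, not_forall]
    constructor
    · rintro ⟨⟨h1, h2⟩, hx⟩
      obtain ⟨p, hp, hxp, hpk⟩ := hx ⟨h1, by omega⟩
      rcases hxp with rfl | rfl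
      · exact Or.inl ⟨p, ⟨hp, hpk, h2⟩, rfl⟩
      · exact Or.inr ⟨p, ⟨hp, hpk, h2⟩, rfl⟩
    · rintro (⟨p, ⟨hp, hpk, hpv⟩, rfl⟩ | ⟨p, ⟨hp, hpk, hpv⟩, rfl⟩) <;>
        have := hδ.1 p hp <;>
        exact ⟨⟨by omega, hpv⟩, fun _ => ⟨p, hp, by simp, hpk⟩⟩
  · simp only [disjoint_left, mem_image, mem_filter]
    rintro x ⟨p, ⟨hp, -⟩, rfl⟩ ⟨q, ⟨hq, -⟩, h⟩
    exact hδ.fst_ne_snd hp hq h.symm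

theorem rankOf_add_sum (hδ : IsDiagram n δ) (hvn : v ≤ n)
    (hv : ∀ q ∈ Kept δ,
      (q.1 - stackMult n δ q ≤ v → q.1 ≤ v) ∧ (q.2 < v → q.2 + stackMult n δ q ≤ v)) :
    rankOf n δ v + ∑ q ∈ Kept δ,
      stackMult n δ q * ((if q.1 ≤ v then 1 else 0) + (if q.2 < v then 1 else 0)) = v := by
  have hrank : rankOf n δ v = #((Icc 1 v).filter (· ∈ KeptVerts n δ)) := by
    refine congrArg card (ext fun x => ?_)
    simp only [mem_filter, mem_Icc]
    exact ⟨fun ⟨hx, hxv⟩ => ⟨⟨(mem_Icc.1 (mem_keptVerts.1 hx).1).1, hxv⟩, hx⟩,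
      fun ⟨⟨_, hxv⟩, hx⟩ => ⟨hx, hxv⟩⟩
  have hsplit := card_filter_add_card_filter_not (s := Icc 1 v) (· ∈ KeptVerts n δ)
  rw [Nat.card_Icc, Nat.add_sub_cancel, card_filter_not_mem_keptVerts hδ hvn,
    card_filter_not_kept hδ, card_filter_not_kept hδ, ← sum_add_distrib, ← hrank] at hsplit
  refine (congrArg (rankOf n δ v + ·) (sum_congr rfl fun q hq => ?_)).trans hsplit
  dsimp only
  rw [card_filter_ne_zero_range (q.1 ≤ v) fun s h1 h2 => ⟨fun h => (hv q hq).1 (by omega),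
      fun h => by omega⟩,
    card_filter_ne_zero_range (q.2 < v) fun s h1 h2 => ⟨fun h => by omega,
      fun h => by have := (hv q hq).2 h; omega⟩]
  split_ifs <;> ring

theorem rankOf_add_sum_of_mem (hδ : IsDiagram n δ) (hv : v ∈ KeptVerts n δ) :
    rankOf n δ v + ∑ q ∈ Kept δ,
      stackMult n δ q * ((if q.1 ≤ v then 1 else 0) + (if q.2 < v then 1 else 0)) = v := by
  refine rankOf_add_sum hδ (mem_Icc.1 (mem_keptVerts.1 hv).1).2 fun q hq =>
    ⟨fun h => ?_, fun h => ?_⟩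
  · by_contra! hlt
    exact (stack_not_mem_keptVerts hδ hq (s := q.1 - v) (by omega) (by omega)).1
      (by rwa [Nat.sub_sub_self hlt.le])
  · by_contra! hlt
    exact (stack_not_mem_keptVerts hδ hq (s := v - q.2) (by omega) (by omega)).2
      (by rwa [Nat.add_sub_cancel' h.le])

theorem card_keptVerts_add (hδ : IsDiagram n δ) :
    #(KeptVerts n δ) + 2 * ∑ q ∈ Kept δ, stackMult n δ q = n := by
  have hfull : rankOf n δ n = #(KeptVerts n δ) :=
    congrArg card (filter_true_of_mem fun x hx => (mem_Icc.1 (mem_keptVerts.1 hx).1).2)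
  have hterm : ∀ q ∈ Kept δ, stackMult n δ q *
      ((if q.1 ≤ n then 1 else 0) + (if q.2 < n then 1 else 0)) = 2 * stackMult n δ q := by
    intro q hq
    have := hδ.1 q (mem_kept.1 hq).1
    have := hδ.1 _ (stack_mem (mem_kept.1 hq).1 (le_refl (stackMult n δ q)))
    dsimp only at this
    split_ifs <;> omega
  have h := rankOf_add_sum hδ le_rfl fun q hq => ⟨fun _ => ?_, fun _ => ?_⟩
  · rwa [hfull, sum_congr rfl hterm, ← mul_sum] at h
  · exact ((hδ.1 q (mem_kept.1 hq).1).2.2).trans' (hδ.1 q (mem_kept.1 hq).1).2.1.le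
  · have := hδ.1 _ (stack_mem (mem_kept.1 hq).1 (le_refl (stackMult n δ q)))
    exact this.2.2

theorem rankOf_mono : Monotone (rankOf n δ) := fun _ _ huv =>
  card_le_card fun x hx => by
    rw [mem_filter] at hx ⊢
    exact ⟨hx.1, hx.2.trans huv⟩

theorem rankOf_lt_rankOf (hv : v ∈ KeptVerts n δ) (huv : u < v) :
    rankOf n δ u < rankOf n δ v := by
  refine card_lt_card ((ssubset_iff_of_subset fun x hx => ?_).2
    ⟨v, mem_filter.2 ⟨hv, le_rfl⟩, fun h => (not_le.2 huv) (mem_filter.1 h).2⟩)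
  rw [mem_filter] at hx ⊢
  exact ⟨hx.1, hx.2.trans huv.le⟩

theorem rankOf_lt_rankOf_iff (hv : v ∈ KeptVerts n δ) : rankOf n δ u < rankOf n δ v ↔ u < v :=
  ⟨rankOf_mono.reflect_lt, rankOf_lt_rankOf hv⟩

theorem rankOf_le_rankOf_iff (hu : u ∈ KeptVerts n δ) : rankOf n δ u ≤ rankOf n δ v ↔ u ≤ v := by
  simpa only [not_lt] using (rankOf_lt_rankOf_iff hu).not

theorem rankOf_injOn : Set.InjOn (rankOf n δ) (KeptVerts n δ) := fun _ hu _ hv h =>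
  le_antisymm ((rankOf_le_rankOf_iff hu).1 h.le) ((rankOf_le_rankOf_iff hv).1 h.ge)

theorem mem_collapse :
    a ∈ collapse n δ ↔ ∃ q ∈ Kept δ, (rankOf n δ q.1, rankOf n δ q.2) = a := mem_image

theorem rankPair_injOn (hδ : IsDiagram n δ) :
    Set.InjOn (fun q : ℕ × ℕ => (rankOf n δ q.1, rankOf n δ q.2)) (Kept δ) := fun _ hq _ hq' h =>
  hδ.eq_of_fst_eq (mem_kept.1 hq).1 (mem_kept.1 hq').1 <|
    rankOf_injOn (fst_mem_keptVerts hδ hq) (fst_mem_keptVerts hδ hq') (congrArg Prod.fst h)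

theorem isDiagram_collapse (hδ : IsDiagram n δ) : IsDiagram #(KeptVerts n δ) (collapse n δ) := by
  constructor
  · intro a ha
    obtain ⟨q, hq, rfl⟩ := mem_collapse.1 ha
    dsimp only
    have hpos : 0 < rankOf n δ q.1 :=
      card_pos.2 ⟨q.1, mem_filter.2 ⟨fst_mem_keptVerts hδ hq, le_rfl⟩⟩
    exact ⟨hpos, rankOf_lt_rankOf (snd_mem_keptVerts hδ hq) (hδ.1 q (mem_kept.1 hq).1).2.1,
      card_filter_le _ _⟩
  · intro a ha a' ha' hne
    obtain ⟨q, hq, rfl⟩ := mem_collapse.1 ha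
    obtain ⟨q', hq', rfl⟩ := mem_collapse.1 ha'
    have hqq' : q ≠ q' := fun h => hne (by rw [h])
    have hqδ := (mem_kept.1 hq).1
    have hq'δ := (mem_kept.1 hq').1
    have h1 := fst_mem_keptVerts hδ hq
    have h2 := snd_mem_keptVerts hδ hq
    have h1' := fst_mem_keptVerts hδ hq'
    have h2' := snd_mem_keptVerts hδ hq'
    exact ⟨fun h => hqq' (hδ.eq_of_fst_eq hqδ hq'δ (rankOf_injOn h1 h1' h)),
      fun h => hδ.fst_ne_snd hqδ hq'δ (rankOf_injOn h1 h2' h),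
      fun h => hδ.fst_ne_snd hq'δ hqδ (rankOf_injOn h1' h2 h.symm),
      fun h => hqq' (hδ.eq_of_snd_eq hqδ hq'δ (rankOf_injOn h2 h2' h))⟩

theorem card_collapse (hδ : IsDiagram n δ) : #(collapse n δ) = #(Kept δ) :=
  card_image_of_injOn (rankPair_injOn hδ)

theorem not_mutuallyCrossing_collapse {k : ℕ} (hMC : ¬ MutuallyCrossing k δ) :
    ¬ MutuallyCrossing k (collapse n δ) := by
  rintro ⟨f, hf, h1, h2, h3⟩
  choose g hg hgf using fun t => mem_collapse.1 (hf t)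
  refine hMC ⟨g, fun t => (mem_kept.1 (hg t)).1, fun t u htu => ?_, fun t u htu => ?_,
    fun t u => ?_⟩
  · have : (f t).1 < (f u).1 := h1 htu
    rw [← hgf t, ← hgf u] at this
    exact rankOf_mono.reflect_lt this
  · have : (f t).2 < (f u).2 := h2 htu
    rw [← hgf t, ← hgf u] at this
    exact rankOf_mono.reflect_lt this
  · have := h3 t u
    rw [← hgf t, ← hgf u] at this
    exact rankOf_mono.reflect_lt this

theorem multFun_rankPair (hδ : IsDiagram n δ) (hq : q ∈ Kept δ) :
    multFun n δ (rankOf n δ q.1, rankOf n δ q.2) = stackMult n δ q := by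
  rw [multFun]
  refine sum_eq_single_of_mem q (mem_filter.2 ⟨hq, rfl⟩) fun q' hq' hne => ?_
  exact absurd (rankPair_injOn hδ (mem_filter.1 hq').1 hq (mem_filter.1 hq').2) hne

theorem multFun_eq_zero (ha : a ∉ collapse n δ) : multFun n δ a = 0 :=
  sum_eq_zero fun q hq => absurd (mem_collapse.2 ⟨q, (mem_filter.1 hq).1, (mem_filter.1 hq).2⟩) ha

theorem sum_multFun (hδ : IsDiagram n δ) :
    ∑ a ∈ collapse n δ, multFun n δ a = ∑ q ∈ Kept δ, stackMult n δ q := by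
  rw [collapse, sum_image (rankPair_injOn hδ)]
  exact sum_congr rfl fun q hq => multFun_rankPair hδ hq

theorem shift_collapse_rankOf (hδ : IsDiagram n δ) (hv : v ∈ KeptVerts n δ) :
    shift (collapse n δ) (multFun n δ) (rankOf n δ v) = v := by
  conv_rhs => rw [← rankOf_add_sum_of_mem hδ hv]
  rw [shift, collapse, sum_image (rankPair_injOn hδ)]
  congr 1
  refine sum_congr rfl fun q hq => ?_
  simp only [multFun_rankPair hδ hq, rankOf_le_rankOf_iff (fst_mem_keptVerts hδ hq),
    rankOf_lt_rankOf_iff hv]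

theorem expand_collapse (hδ : IsDiagram n δ) : expand (collapse n δ) (multFun n δ) = δ := by
  ext x
  rw [mem_expand]
  constructor
  · rintro ⟨a, ha, s, hs, rfl⟩
    obtain ⟨q, hq, rfl⟩ := mem_collapse.1 ha
    rw [multFun_rankPair hδ hq] at hs
    rw [shift_collapse_rankOf hδ (fst_mem_keptVerts hδ hq),
      shift_collapse_rankOf hδ (snd_mem_keptVerts hδ hq)]
    exact stack_mem (mem_kept.1 hq).1 hs
  · intro hx
    obtain ⟨q, hq, s, hs, rfl⟩ := exists_kept_of_mem hδ hx
    refine ⟨_, mem_collapse.2 ⟨q, hq, rfl⟩, s, (multFun_rankPair hδ hq).symm ▸ hs, ?_⟩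
    rw [shift_collapse_rankOf hδ (fst_mem_keptVerts hδ hq),
      shift_collapse_rankOf hδ (snd_mem_keptVerts hδ hq)]

theorem shift_mem_kept_of_mem_collapse (hδ : IsDiagram n δ) (ha : a ∈ collapse n δ) :
    (shift (collapse n δ) (multFun n δ) a.1, shift (collapse n δ) (multFun n δ) a.2) ∈ Kept δ := by
  obtain ⟨q, hq, rfl⟩ := mem_collapse.1 ha
  rwa [shift_collapse_rankOf hδ (fst_mem_keptVerts hδ hq),
    shift_collapse_rankOf hδ (snd_mem_keptVerts hδ hq)]

theorem collapse_arc_length (hδ : IsDiagram n δ) (hlen : ∀ p ∈ δ, p.1 + 3 ≤ p.2)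
    (ha : a ∈ collapse n δ) : a.1 + 2 ≤ a.2 := by
  have hq := hlen _ (mem_kept.1 (shift_mem_kept_of_mem_collapse hδ ha)).1
  have hlt := ((isDiagram_collapse hδ).1 a ha).2.1
  by_contra! h
  rw [shift_snd_eq_of_snd_eq_succ (isDiagram_collapse hδ) ha (by omega)] at hq
  omega

theorem collapse_not_isolated (hδ : IsDiagram n δ) (hlen : ∀ p ∈ δ, p.1 + 3 ≤ p.2)
    (ha : a ∈ collapse n δ) (h : a.2 = a.1 + 2) :
    a.1 + 1 ∉ IsolatedVerts #(KeptVerts n δ) (collapse n δ) := fun hiso => by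
  have hq := hlen _ (mem_kept.1 (shift_mem_kept_of_mem_collapse hδ ha)).1
  rw [shift_snd_eq_of_isolated (isDiagram_collapse hδ) ha h hiso] at hq
  omega

theorem collapse_not_parallel (hδ : IsDiagram n δ) (ha : a ∈ collapse n δ) :
    (a.1 + 1, a.2 - 1) ∉ collapse n δ := fun ha' => by
  have hq := mem_kept.1 (shift_mem_kept_of_mem_collapse hδ ha)
  have := inner_mem_expand (m := multFun n δ) (isDiagram_collapse hδ) ha ha'
  rw [expand_collapse hδ] at this
  exact hq.2 this

theorem sub_one_le_stackMult (hδ : IsDiagram n δ)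
    (hstack : ∀ p ∈ δ, ∃ q : ℕ × ℕ, (∀ t < σ, (q.1 + t, q.2 - t) ∈ δ) ∧
      ∃ t < σ, p = (q.1 + t, q.2 - t))
    (hq : q ∈ Kept δ) : σ - 1 ≤ stackMult n δ q := by
  obtain ⟨r, hr, t, ht, rfl⟩ := hstack q (mem_kept.1 hq).1
  have hb := (hδ.1 _ (hr t ht)).2.1
  dsimp only at hb
  -- an innermost arc must be the last arc of the run
  have htσ : t = σ - 1 := by
    by_contra hne
    refine (mem_kept.1 hq).2 ?_
    convert hr (t + 1) (by omega) using 1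
    ext <;> dsimp only <;> omega
  refine le_stackMult hδ fun s hs => ?_
  convert hr (t - s) (by omega) using 1
  ext <;> dsimp only <;> omega

end Collapse

section CollapseExpand

variable {nc n : ℕ} {M : Finset (ℕ × ℕ)} {m : ℕ × ℕ → ℕ} {p : ℕ × ℕ}

theorem stackMult_expand (hM : IsDiagram nc M) (hpar : ∀ p ∈ M, (p.1 + 1, p.2 - 1) ∉ M)
    (hn : n = nc + 2 * ∑ p ∈ M, m p) (hp : p ∈ M) :
    stackMult n (expand M m) (shift M m p.1, shift M m p.2) = m p := by
  have hδ : IsDiagram n (expand M m) := hn ▸ isDiagram_expand hM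
  have hinj := (shift_pair_injective (M := M) (m := m)).injOn (s := M)
  have hle : ∀ p ∈ M, m p ≤ stackMult n (expand M m) (shift M m p.1, shift M m p.2) :=
    fun p hp => le_stackMult hδ fun s hs => mem_expand.2 ⟨p, hp, s, hs, rfl⟩
  -- count the arcs of the expansion once along `M` and once along its innermost arcs
  have hsum : ∑ p ∈ M, m p = ∑ p ∈ M, stackMult n (expand M m) (shift M m p.1, shift M m p.2) := by
    have h := card_eq_card_kept_add_sum hδ
    rw [card_expand hM, kept_expand hM hpar, card_image_of_injOn hinj, sum_image hinj] at h
    omega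
  exact ((sum_eq_sum_iff_of_le hle).1 hsum p hp).symm

theorem rankOf_expand_shift (hM : IsDiagram nc M) (hpar : ∀ p ∈ M, (p.1 + 1, p.2 - 1) ∉ M)
    (hn : n = nc + 2 * ∑ p ∈ M, m p) {w : ℕ} (hw : shift M m w ∈ KeptVerts n (expand M m)) :
    rankOf n (expand M m) (shift M m w) = w := by
  have hδ : IsDiagram n (expand M m) := hn ▸ isDiagram_expand hM
  have h := rankOf_add_sum_of_mem hδ hw
  rw [kept_expand hM hpar, sum_image (shift_pair_injective.injOn)] at h
  have hterm : ∀ p ∈ M, stackMult n (expand M m) (shift M m p.1, shift M m p.2) *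
      ((if (shift M m p.1, shift M m p.2).1 ≤ shift M m w then 1 else 0) +
        (if (shift M m p.1, shift M m p.2).2 < shift M m w then 1 else 0)) =
      m p * ((if p.1 ≤ w then 1 else 0) + (if p.2 < w then 1 else 0)) := fun p hp => by
    simp only [stackMult_expand hM hpar hn hp, strictMono_shift.le_iff_le,
      strictMono_shift.lt_iff_lt]
  rw [sum_congr rfl hterm] at h
  have hshift : shift M m w =
      w + ∑ p ∈ M, m p * ((if p.1 ≤ w then 1 else 0) + (if p.2 < w then 1 else 0)) := rfl
  omega

theorem rankPair_expand_shift (hM : IsDiagram nc M) (hpar : ∀ p ∈ M, (p.1 + 1, p.2 - 1) ∉ M)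
    (hn : n = nc + 2 * ∑ p ∈ M, m p) (hp : p ∈ M) :
    (rankOf n (expand M m) (shift M m p.1), rankOf n (expand M m) (shift M m p.2)) = p := by
  have hδ : IsDiagram n (expand M m) := hn ▸ isDiagram_expand hM
  have hk := shift_pair_mem_kept_expand (m := m) hM hpar hp
  exact Prod.ext (rankOf_expand_shift hM hpar hn (fst_mem_keptVerts hδ hk))
    (rankOf_expand_shift hM hpar hn (snd_mem_keptVerts hδ hk))

theorem collapse_expand (hM : IsDiagram nc M) (hpar : ∀ p ∈ M, (p.1 + 1, p.2 - 1) ∉ M)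
    (hn : n = nc + 2 * ∑ p ∈ M, m p) : collapse n (expand M m) = M := by
  rw [collapse, kept_expand hM hpar, image_image]
  exact (image_congr fun p hp => rankPair_expand_shift hM hpar hn hp).trans image_id

theorem multFun_expand (hM : IsDiagram nc M) (hpar : ∀ p ∈ M, (p.1 + 1, p.2 - 1) ∉ M)
    (hn : n = nc + 2 * ∑ p ∈ M, m p) (hm0 : ∀ a ∉ M, m a = 0) : multFun n (expand M m) = m := by
  have hδ : IsDiagram n (expand M m) := hn ▸ isDiagram_expand hM
  funext a
  by_cases ha : a ∈ M
  · have h := multFun_rankPair hδ (shift_pair_mem_kept_expand hM hpar ha)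
    dsimp only at h
    rwa [rankPair_expand_shift hM hpar hn ha, stackMult_expand hM hpar hn ha] at h
  · rw [hm0 a ha, multFun_eq_zero (by rwa [collapse_expand hM hpar hn])]

end CollapseExpand

section Bijection

variable {k σ n h : ℕ}

def rnaStructures (k σ n h : ℕ) : Set (Finset (ℕ × ℕ)) :=
  {δ | IsDiagram n δ ∧ ¬ MutuallyCrossing k δ ∧ δ.card = h ∧ (∀ p ∈ δ, p.1 + 3 ≤ p.2) ∧
    ∀ p ∈ δ, ∃ q : ℕ × ℕ, (∀ t < σ, (q.1 + t, q.2 - t) ∈ δ) ∧ ∃ t < σ, p = (q.1 + t, q.2 - t)}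

def markedCores (k σ n h : ℕ) : Set (Finset (ℕ × ℕ) × (ℕ × ℕ → ℕ)) :=
  {q | ∃ b : ℕ, σ - 1 ≤ b ∧ b ≤ h - 1 ∧ IsCoreStar k (n - 2 * b) (h - b) q.1 ∧
    (∀ a, a ∉ q.1 → q.2 a = 0) ∧ (∀ a ∈ q.1, σ - 1 ≤ q.2 a) ∧ ∑ a ∈ q.1, q.2 a = b}

theorem mapsTo_collapse (hh : 1 ≤ h) :
    Set.MapsTo (fun δ => (collapse n δ, multFun n δ)) (rnaStructures k σ n h)
      (markedCores k σ n h) := by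
  rintro δ ⟨hδ, hMC, rfl, hlen, hstack⟩
  obtain ⟨q0, hq0⟩ : (Kept δ).Nonempty := by
    obtain ⟨p, hp⟩ := card_pos.1 hh
    obtain ⟨q, hq, -⟩ := exists_kept_of_mem hδ hp
    exact ⟨q, hq⟩
  have hcard := card_eq_card_kept_add_sum hδ
  have hKV := card_keptVerts_add hδ
  have hσ := sub_one_le_stackMult hδ hstack hq0
  have hq0le := single_le_sum (fun q _ => Nat.zero_le (stackMult n δ q)) hq0
  have hKpos := card_pos.2 ⟨q0, hq0⟩
  have hnc : n - 2 * ∑ q ∈ Kept δ, stackMult n δ q = #(KeptVerts n δ) := by omega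
  refine ⟨_, by omega, by omega, ⟨hnc ▸ isDiagram_collapse hδ, not_mutuallyCrossing_collapse hMC,
    by rw [card_collapse hδ]; omega, fun a ha => collapse_arc_length hδ hlen ha,
    fun a ha => collapse_not_parallel hδ ha,
    hnc ▸ fun a ha => collapse_not_isolated hδ hlen ha⟩,
    fun a ha => multFun_eq_zero ha, fun a ha => ?_, sum_multFun hδ⟩
  obtain ⟨q, hq, rfl⟩ := mem_collapse.1 ha
  dsimp only
  rw [multFun_rankPair hδ hq]
  exact sub_one_le_stackMult hδ hstack hq

theorem eq_sub_add_of_isCoreStar {b : ℕ} {M : Finset (ℕ × ℕ)} (hh : 1 ≤ h) (hb : b ≤ h - 1)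
    (hM : IsCoreStar k (n - 2 * b) (h - b) M) : n = n - 2 * b + 2 * b := by
  have := hM.1.two_le (card_pos.1 (by rw [hM.2.2.1]; omega))
  omega

theorem mapsTo_expand (hσ : 2 ≤ σ) (hh : 1 ≤ h) :
    Set.MapsTo (fun q => expand q.1 q.2) (markedCores k σ n h) (rnaStructures k σ n h) := by
  rintro ⟨M, m⟩ ⟨b, -, hb, hcore, -, hm, rfl⟩
  have hn := eq_sub_add_of_isCoreStar hh hb hcore
  obtain ⟨hM, hMC, hcard, hlen, -, hiso⟩ := hcore
  refine ⟨hn ▸ isDiagram_expand hM, not_mutuallyCrossing_expand hM hMC, ?_,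
    expand_arc_length hM hlen hiso fun p hp => ?_, expand_stack hM (by omega) hm⟩
  · rw [card_expand hM, hcard]
    omega
  · have := hm p hp
    omega

theorem leftInvOn_expand :
    Set.LeftInvOn (fun q => expand q.1 q.2) (fun δ => (collapse n δ, multFun n δ))
      (rnaStructures k σ n h) := fun _ hδ => expand_collapse hδ.1

theorem rightInvOn_expand (hh : 1 ≤ h) :
    Set.RightInvOn (fun q => expand q.1 q.2) (fun δ => (collapse n δ, multFun n δ))
      (markedCores k σ n h) := by
  rintro ⟨M, m⟩ ⟨b, -, hb, hcore, hm0, -, rfl⟩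
  have hn := eq_sub_add_of_isCoreStar hh hb hcore
  exact Prod.ext (collapse_expand hcore.1 hcore.2.2.2.2.1 hn)
    (multFun_expand hcore.1 hcore.2.2.2.2.1 hn hm0)

end Bijection

end StackCollapse

theorem stmt14_general (k σ n h : ℕ) (hσ : 2 ≤ σ) (hh : 1 ≤ h) :
    Set.BijOn (fun δ => (collapse n δ, multFun n δ))
      {δ : Finset (ℕ × ℕ) | IsDiagram n δ ∧ ¬ MutuallyCrossing k δ ∧ δ.card = h ∧
        (∀ p ∈ δ, p.1 + 3 ≤ p.2) ∧
        ∀ p ∈ δ, ∃ q : ℕ × ℕ, (∀ t < σ, (q.1 + t, q.2 - t) ∈ δ) ∧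
          ∃ t < σ, p = (q.1 + t, q.2 - t)}
      {q : Finset (ℕ × ℕ) × (ℕ × ℕ → ℕ) | ∃ b : ℕ, σ - 1 ≤ b ∧ b ≤ h - 1 ∧
        IsCoreStar k (n - 2 * b) (h - b) q.1 ∧
        (∀ a, a ∉ q.1 → q.2 a = 0) ∧ (∀ a ∈ q.1, σ - 1 ≤ q.2 a) ∧
        ∑ a ∈ q.1, q.2 a = b} :=
  Set.InvOn.bijOn ⟨StackCollapse.leftInvOn_expand, StackCollapse.rightInvOn_expand hh⟩
    (StackCollapse.mapsTo_collapse hh) (StackCollapse.mapsTo_expand hσ hh)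

/-- The map `δ ↦ (c(δ), (a_t)_t)` — collapsing each maximal stack to a single
arc and recording, for each arc of the core, the number of arcs removed from
its stack — is a bijection from the set of `k`-noncrossing structures on `[n]`
with `h` arcs, arc-length ≥ 3 and stack-length ≥ σ, onto the disjoint union
over `σ-1 ≤ b ≤ h-1` of `C*_k(n-2b, h-b) × {(a_t) : ∑ a_t = b, a_t ≥ σ-1}`. -/
theorem stmt14 (k σ n h : ℕ) (hk : 2 ≤ k) (hσ : 2 ≤ σ) (hn : 1 ≤ n) (hh : 1 ≤ h) :
    Set.BijOn (fun δ => (collapse n δ, multFun n δ))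
      {δ : Finset (ℕ × ℕ) | IsDiagram n δ ∧ ¬ MutuallyCrossing k δ ∧ δ.card = h ∧
        (∀ p ∈ δ, p.1 + 3 ≤ p.2) ∧
        ∀ p ∈ δ, ∃ q : ℕ × ℕ, (∀ t < σ, (q.1 + t, q.2 - t) ∈ δ) ∧
          ∃ t < σ, p = (q.1 + t, q.2 - t)}
      {q : Finset (ℕ × ℕ) × (ℕ × ℕ → ℕ) | ∃ b : ℕ, σ - 1 ≤ b ∧ b ≤ h - 1 ∧
        IsCoreStar k (n - 2 * b) (h - b) q.1 ∧
        (∀ a, a ∉ q.1 → q.2 a = 0) ∧ (∀ a ∈ q.1, σ - 1 ≤ q.2 a) ∧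
        ∑ a ∈ q.1, q.2 a = b} :=
  stmt14_general k σ n h hσ hh
end

section
/- As formal power series in z: ∑_{n ≥ 0} ∑_{h ≤ n/2} T_{2,1}(n,h) z^n = (1/(z² - z + 1)) ∑_{n ≥ 0} Cat(n) (z/(z² - z + 1))^{2n}, where T_{2,1}(n,h) is the number of RNA secondary structures on [n] with h arcs and Cat(n) is the n-th Catalan number (which equals f_2(2n, 0), the number of noncrossing perfect matchings on [2n]). -/
open Finset

/-- `T_{2,1}(n,h)`: the number of RNA secondary structures on `[n]` (partial
matchings with no two crossing arcs and all arcs of length ≥ 2) with `h` arcs. -/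
noncomputable def T21 (n h : ℕ) : ℕ :=
  {M : Finset (ℕ × ℕ) | IsDiagram n M ∧ ¬ MutuallyCrossing 2 M ∧
    (∀ p ∈ M, p.1 + 2 ≤ p.2) ∧ M.card = h}.ncard

/-!
Let `t n` count the secondary structures on `[n]`. In a structure on `[n + 2]` the last vertex
is either unpaired or paired with some `i + 1 ≤ n`, and such an arc separates independent
structures on the `i` vertices to its left and the `n - i` vertices beneath it. Hence
`t (n + 2) = t (n + 1) + ∑_{i < n} t i * t (n - i)`, i.e. `T = ∑ t n z^n` satisfies
`(z² - z + 1) T = 1 + z² T²`. Then `W = (z² - z + 1) T` satisfies `W = 1 + u² W²` with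
`u = z / (z² - z + 1)`: this is Catalan's equation `C = 1 + x C²` at `x = u²`, whose solution is
unique, so `W = C(u²)`. As `u²` has order 2, only the terms `n ≤ N` of `C(u²)` contribute to the
coefficient of `z^N`.
-/

namespace RNA

/-- Two distinct arcs of a noncrossing partial matching are side by side or nested, with no shared
endpoint. -/
def Compatible (p q : ℕ × ℕ) : Prop :=
  p.2 < q.1 ∨ q.2 < p.1 ∨ (p.1 < q.1 ∧ q.2 < p.2) ∨ (q.1 < p.1 ∧ p.2 < q.2)

instance : Std.Symm Compatible := ⟨fun _ _ h ↦ by unfold Compatible at *; omega⟩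

def arcs (n : ℕ) : Finset (ℕ × ℕ) := {p ∈ Icc 1 n ×ˢ Icc 1 n | p.1 + 2 ≤ p.2}

open scoped Classical in
noncomputable def secondaryStructures (n : ℕ) : Finset (Finset (ℕ × ℕ)) :=
  {M ∈ (arcs n).powerset | (M : Set (ℕ × ℕ)).Pairwise Compatible}

variable {n : ℕ} {p : ℕ × ℕ} {M : Finset (ℕ × ℕ)}

@[simp]
theorem mem_arcs : p ∈ arcs n ↔ 1 ≤ p.1 ∧ p.1 + 2 ≤ p.2 ∧ p.2 ≤ n := by
  simp only [arcs, mem_filter, mem_product, mem_Icc]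
  omega

theorem mem_secondaryStructures :
    M ∈ secondaryStructures n ↔ M ⊆ arcs n ∧ (M : Set (ℕ × ℕ)).Pairwise Compatible := by
  classical
  rw [secondaryStructures, mem_filter, mem_powerset]

theorem not_mutuallyCrossing_two_iff :
    ¬ MutuallyCrossing 2 M ↔ ∀ p ∈ M, ∀ q ∈ M, ¬ (p.1 < q.1 ∧ q.1 < p.2 ∧ p.2 < q.2) := by
  constructor
  · rintro h p hp q hq ⟨h1, h2, h3⟩
    refine h ⟨![p, q], fun t ↦ ?_, fun a b hab ↦ ?_, fun a b hab ↦ ?_, fun s t ↦ ?_⟩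
    · fin_cases t <;> simpa
    · fin_cases a <;> fin_cases b <;> simp_all
    · fin_cases a <;> fin_cases b <;> simp_all
    · fin_cases s <;> fin_cases t <;> simp <;> omega
  · rintro h ⟨f, hfM, h1, h2, h3⟩
    have h01 : (0 : Fin 2) < 1 := by decide
    exact h (f 0) (hfM 0) (f 1) (hfM 1) ⟨h1 h01, h3 1 0, h2 h01⟩

theorem mem_secondaryStructures_iff_isDiagram :
    M ∈ secondaryStructures n ↔
      IsDiagram n M ∧ ¬ MutuallyCrossing 2 M ∧ ∀ p ∈ M, p.1 + 2 ≤ p.2 := by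
  simp only [mem_secondaryStructures, not_mutuallyCrossing_two_iff, IsDiagram, Set.Pairwise,
    subset_iff, mem_arcs, mem_coe, Compatible]
  constructor
  · rintro ⟨hb, hc⟩
    refine ⟨⟨fun p hp ↦ ?_, fun p hp q hq hpq ↦ ?_⟩, fun p hp q hq ↦ ?_, fun p hp ↦ (hb hp).2.1⟩
    · have := hb hp; omega
    · have := hb hp; have := hb hq; have := hc hp hq hpq; omega
    · by_cases hpq : p = q
      · subst hpq; omega
      · have := hc hp hq hpq; omega
  · rintro ⟨⟨hb, hd⟩, hc, hl⟩
    refine ⟨fun p hp ↦ ?_, fun p hp q hq hpq ↦ ?_⟩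
    · have := hb p hp; have := hl p hp; omega
    · have := hb p hp; have := hb q hq; have := hd p hp q hq hpq
      have := hc p hp q hq; have := hc q hq p hp; omega

theorem card_le_half_of_mem_secondaryStructures (hM : M ∈ secondaryStructures n) :
    #M ≤ n / 2 := by
  obtain ⟨hsub, hc⟩ := mem_secondaryStructures.mp hM
  have hb : ∀ p ∈ M, 1 ≤ p.1 ∧ p.1 + 2 ≤ p.2 ∧ p.2 ≤ n := fun p hp ↦ mem_arcs.mp (hsub hp)
  have hne : ∀ p ∈ M, ∀ q ∈ M, p ≠ q → p.1 ≠ q.1 ∧ p.1 ≠ q.2 ∧ p.2 ≠ q.2 := by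
    intro p hp q hq hpq
    have := hb p hp; have := hb q hq; have := hc hp hq hpq; unfold Compatible at this; omega
  have hfst : #(M.image Prod.fst) = #M := card_image_of_injOn fun p hp q hq h ↦
    by_contra fun hpq ↦ (hne p hp q hq hpq).1 h
  have hsnd : #(M.image Prod.snd) = #M := card_image_of_injOn fun p hp q hq h ↦
    by_contra fun hpq ↦ (hne p hp q hq hpq).2.2 h
  have hdisj : Disjoint (M.image Prod.fst) (M.image Prod.snd) := by
    simp only [disjoint_left, mem_image]
    rintro _ ⟨p, hp, rfl⟩ ⟨q, hq, hqp⟩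
    by_cases hpq : p = q
    · subst hpq; have := hb p hp; omega
    · exact (hne p hp q hq hpq).2.1 hqp.symm
  have hunion : M.image Prod.fst ∪ M.image Prod.snd ⊆ Icc 1 n := by
    refine union_subset ?_ ?_ <;>
      · intro x hx
        obtain ⟨p, hp, rfl⟩ := mem_image.mp hx
        have := hb p hp
        rw [mem_Icc]
        omega
  have := card_le_card hunion
  rw [card_union_of_disjoint hdisj, hfst, hsnd, Nat.card_Icc] at this
  omega

theorem sum_T21_eq_card_secondaryStructures (n : ℕ) :
    ∑ h ∈ range (n / 2 + 1), T21 n h = #(secondaryStructures n) := by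
  have hT : ∀ h, T21 n h = #{M ∈ secondaryStructures n | #M = h} := by
    intro h
    rw [T21, ← Set.ncard_coe_finset]
    congr 1
    ext M
    simp [mem_secondaryStructures_iff_isDiagram, and_assoc]
  simp_rw [hT]
  refine (card_eq_sum_card_fiberwise fun M hM ↦ ?_).symm
  have := card_le_half_of_mem_secondaryStructures hM
  rw [mem_coe, mem_range]
  omega

theorem secondaryStructures_of_le_one (hn : n ≤ 1) : secondaryStructures n = {∅} := by
  have harcs : arcs n = ∅ := by
    ext p
    simp only [mem_arcs, notMem_empty, iff_false]
    omega
  ext M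
  simp +contextual [mem_secondaryStructures, harcs]

def shift (c : ℕ) : ℕ × ℕ ↪ ℕ × ℕ := (addRightEmbedding c).prodMap (addRightEmbedding c)

@[simp]
theorem shift_apply (c : ℕ) (p : ℕ × ℕ) : shift c p = (p.1 + c, p.2 + c) := rfl

@[simp]
theorem compatible_shift {c : ℕ} {p q : ℕ × ℕ} :
    Compatible (shift c p) (shift c q) ↔ Compatible p q := by
  simp only [Compatible, shift_apply]
  omega

/-- Inverse to splitting a structure at its arc `(i + 1, i + j + 2)`: `A` lies to the left of the
arc and `B` is shifted beneath it. -/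
def join (i j : ℕ) (A B : Finset (ℕ × ℕ)) : Finset (ℕ × ℕ) :=
  insert (i + 1, i + j + 2) (A ∪ B.map (shift (i + 1)))

theorem mem_join {i j : ℕ} {A B : Finset (ℕ × ℕ)} :
    p ∈ join i j A B ↔ p = (i + 1, i + j + 2) ∨ p ∈ A ∨ ∃ q ∈ B, shift (i + 1) q = p := by
  simp only [join, mem_insert, mem_union, mem_map]

theorem inter_mem_secondaryStructures {m : ℕ} (i : ℕ) (hM : M ∈ secondaryStructures m) :
    arcs i ∩ M ∈ secondaryStructures i :=
  mem_secondaryStructures.mpr ⟨inter_subset_left, (mem_secondaryStructures.mp hM).2.mono (by simp)⟩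

theorem filter_shift_mem_secondaryStructures {m : ℕ} (c j : ℕ) (hM : M ∈ secondaryStructures m) :
    {p ∈ arcs j | shift c p ∈ M} ∈ secondaryStructures j := by
  refine mem_secondaryStructures.mpr ⟨filter_subset _ _, fun p hp q hq hpq ↦ ?_⟩
  exact compatible_shift.mp <| (mem_secondaryStructures.mp hM).2 (mem_filter.mp hp).2
    (mem_filter.mp hq).2 ((shift c).injective.ne hpq)

theorem join_mem_secondaryStructures {i j : ℕ} {A B : Finset (ℕ × ℕ)} (hj : 1 ≤ j)
    (hA : A ∈ secondaryStructures i) (hB : B ∈ secondaryStructures j) :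
    join i j A B ∈ secondaryStructures (i + j + 2) := by
  obtain ⟨hA, hAc⟩ := mem_secondaryStructures.mp hA
  obtain ⟨hB, hBc⟩ := mem_secondaryStructures.mp hB
  refine mem_secondaryStructures.mpr ⟨fun q hq ↦ ?_, ?_⟩
  · rcases mem_join.mp hq with rfl | hq | ⟨p, hp, rfl⟩
    · exact mem_arcs.mpr (by omega)
    · have := mem_arcs.mp (hA hq)
      exact mem_arcs.mpr (by omega)
    · have := mem_arcs.mp (hB hp)
      exact mem_arcs.mpr (by simp only [shift_apply]; omega)
  rw [join, coe_insert, coe_union, coe_map, Set.pairwise_insert_of_symm,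
    Set.pairwise_union_of_symm, (shift (i + 1)).injective.injOn.pairwise_image]
  refine ⟨⟨hAc, fun p hp q hq hpq ↦ compatible_shift.mpr (hBc hp hq hpq), ?_⟩, ?_⟩
  · rintro a ha _ ⟨b, hb, rfl⟩ -
    have := mem_arcs.mp (hA ha)
    simp only [Compatible, shift_apply]
    omega
  · rintro _ (ha | ⟨b, hb, rfl⟩) -
    · have := mem_arcs.mp (hA ha)
      simp only [Compatible]
      omega
    · have := mem_arcs.mp (hB hb)
      simp only [Compatible, shift_apply]
      omega

theorem join_inter_filter_shift {i j : ℕ} (hM : M ∈ secondaryStructures (i + j + 2))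
    (harc : (i + 1, i + j + 2) ∈ M) :
    join i j (arcs i ∩ M) {p ∈ arcs j | shift (i + 1) p ∈ M} = M := by
  obtain ⟨hsub, hc⟩ := mem_secondaryStructures.mp hM
  ext q
  simp only [mem_join, mem_inter, mem_filter]
  constructor
  · rintro (rfl | ⟨-, hq⟩ | ⟨p, ⟨-, hp⟩, rfl⟩) <;> assumption
  intro hq
  by_cases hqarc : q = (i + 1, i + j + 2)
  · exact Or.inl hqarc
  have := mem_arcs.mp (hsub hq)
  have hqc := hc hq harc hqarc
  unfold Compatible at hqc
  by_cases hleft : q.2 ≤ i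
  · exact Or.inr (Or.inl ⟨mem_arcs.mpr (by omega), hq⟩)
  · have hq' : shift (i + 1) (q.1 - (i + 1), q.2 - (i + 1)) = q :=
      Prod.ext (by simp only [shift_apply]; omega) (by simp only [shift_apply]; omega)
    exact Or.inr (Or.inr ⟨_, ⟨mem_arcs.mpr (by omega), hq'.symm ▸ hq⟩, hq'⟩)

theorem arcs_inter_join {i j : ℕ} {A B : Finset (ℕ × ℕ)} (hA : A ⊆ arcs i) :
    arcs i ∩ join i j A B = A := by
  ext q
  simp only [mem_inter, mem_join]
  constructor
  · rintro ⟨hq, rfl | hqA | ⟨p, -, rfl⟩⟩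
    · simp only [mem_arcs] at hq
      omega
    · exact hqA
    · simp only [mem_arcs, shift_apply] at hq
      omega
  · exact fun hq ↦ ⟨hA hq, Or.inr (Or.inl hq)⟩

theorem filter_shift_join {i j : ℕ} {A B : Finset (ℕ × ℕ)} (hA : A ⊆ arcs i) (hB : B ⊆ arcs j) :
    {p ∈ arcs j | shift (i + 1) p ∈ join i j A B} = B := by
  ext p
  simp only [mem_filter, mem_join, (shift (i + 1)).injective.eq_iff, exists_eq_right]
  constructor
  · rintro ⟨hp, hparc | hpA | hpB⟩
    · simp only [mem_arcs, shift_apply, Prod.ext_iff] at hp hparc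
      omega
    · have := mem_arcs.mp (hA hpA)
      simp only [shift_apply] at this
      omega
    · exact hpB
  · exact fun hp ↦ ⟨hB hp, Or.inr (Or.inr hp)⟩

theorem card_filter_mem_secondaryStructures (i j : ℕ) (hj : 1 ≤ j) :
    #{M ∈ secondaryStructures (i + j + 2) | (i + 1, i + j + 2) ∈ M} =
      #(secondaryStructures i) * #(secondaryStructures j) := by
  classical
  rw [← card_product]
  refine card_nbij' (fun M ↦ (arcs i ∩ M, {p ∈ arcs j | shift (i + 1) p ∈ M}))
    (fun AB ↦ join i j AB.1 AB.2) ?_ ?_ ?_ ?_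
  · intro M hM
    have hM := (mem_filter.mp hM).1
    exact mem_product.mpr
      ⟨inter_mem_secondaryStructures i hM, filter_shift_mem_secondaryStructures _ j hM⟩
  · rintro ⟨A, B⟩ hAB
    obtain ⟨hA, hB⟩ := mem_product.mp hAB
    exact mem_filter.mpr ⟨join_mem_secondaryStructures hj hA hB, mem_insert_self _ _⟩
  · intro M hM
    exact join_inter_filter_shift (mem_filter.mp hM).1 (mem_filter.mp hM).2
  · rintro ⟨A, B⟩ hAB
    obtain ⟨hA, hB⟩ := mem_product.mp hAB
    exact Prod.ext (arcs_inter_join (mem_secondaryStructures.mp hA).1)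
      (filter_shift_join (mem_secondaryStructures.mp hA).1 (mem_secondaryStructures.mp hB).1)

theorem secondaryStructures_add_two (n : ℕ) :
    secondaryStructures (n + 2) = secondaryStructures (n + 1) ∪
      (range n).biUnion fun i ↦ {M ∈ secondaryStructures (n + 2) | (i + 1, n + 2) ∈ M} := by
  ext M
  simp only [mem_union, mem_biUnion, mem_range, mem_filter]
  constructor
  · intro hM
    obtain ⟨hsub, hc⟩ := mem_secondaryStructures.mp hM
    by_cases h : ∃ p ∈ M, p.2 = n + 2
    · obtain ⟨p, hp, hp2⟩ := h
      have := mem_arcs.mp (hsub hp)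
      have hp' : (p.1 - 1 + 1, n + 2) = p := Prod.ext (by simp only; omega) hp2.symm
      exact Or.inr ⟨p.1 - 1, by omega, hM, hp' ▸ hp⟩
    · push Not at h
      refine Or.inl (mem_secondaryStructures.mpr ⟨fun p hp ↦ ?_, hc⟩)
      have := mem_arcs.mp (hsub hp)
      have := h p hp
      exact mem_arcs.mpr (by omega)
  · rintro (hM | ⟨i, -, hM, -⟩)
    · obtain ⟨hsub, hc⟩ := mem_secondaryStructures.mp hM
      refine mem_secondaryStructures.mpr ⟨fun p hp ↦ ?_, hc⟩
      have := mem_arcs.mp (hsub hp)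
      exact mem_arcs.mpr (by omega)
    · exact hM

theorem card_secondaryStructures_add_two (n : ℕ) :
    #(secondaryStructures (n + 2)) =
      #(secondaryStructures (n + 1)) +
        ∑ i ∈ range n, #(secondaryStructures i) * #(secondaryStructures (n - i)) := by
  classical
  rw [secondaryStructures_add_two, card_union_of_disjoint, card_biUnion]
  · refine congrArg _ (sum_congr rfl fun i hi ↦ ?_)
    obtain ⟨j, rfl⟩ := Nat.exists_eq_add_of_le (mem_range.mp hi).le
    rw [Nat.add_sub_cancel_left]
    exact card_filter_mem_secondaryStructures i j (by have := mem_range.mp hi; omega)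
  · intro i hi i' hi' hii'
    simp only [coe_range, Set.mem_Iio] at hi hi'
    simp only [disjoint_left, mem_filter, not_and]
    intro M ⟨hM, hiM⟩ _ hi'M
    have := (mem_secondaryStructures.mp hM).2 hiM hi'M (by simp only [ne_eq, Prod.mk.injEq]; omega)
    simp only [Compatible] at this
    omega
  · simp only [disjoint_left, mem_biUnion, mem_filter, not_exists, not_and]
    intro M hM i _ _ hi
    have := mem_arcs.mp ((mem_secondaryStructures.mp hM).1 hi)
    omega

/-- The term `i = n` on the right would pair `n + 1` with `n + 2`, an arc of length one; it is
balanced by the second term on the left. -/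
theorem card_secondaryStructures_rec (n : ℕ) :
    #(secondaryStructures (n + 2)) + #(secondaryStructures n) =
      #(secondaryStructures (n + 1)) +
        ∑ p ∈ antidiagonal n, #(secondaryStructures p.1) * #(secondaryStructures p.2) := by
  rw [Nat.sum_antidiagonal_eq_sum_range_succ_mk, sum_range_succ, card_secondaryStructures_add_two,
    Nat.sub_self, secondaryStructures_of_le_one zero_le_one, card_singleton, mul_one, add_assoc]

end RNA

namespace PowerSeries

variable {R : Type*} [CommRing R]

theorem eq_of_eq_one_add_mul_sq {a F G : R⟦X⟧} (ha : constantCoeff a = 0)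
    (hF : F = 1 + a * F ^ 2) (hG : G = 1 + a * G ^ 2) : F = G := by
  have hunit : IsUnit (1 - a * (F + G)) := by
    rw [isUnit_iff_constantCoeff]
    simp [ha]
  have hfactor : (F - G) * (1 - a * (F + G)) = 0 := by linear_combination hF - hG
  exact sub_eq_zero.mp (hunit.mul_left_eq_zero.mp hfactor)

theorem coeff_eq_of_X_pow_dvd_sub {N : ℕ} {F G : R⟦X⟧} (h : X ^ (N + 1) ∣ F - G) :
    coeff N F = coeff N G := by
  rw [← sub_eq_zero, ← map_sub]
  exact X_pow_dvd_iff.mp h N N.lt_succ_self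

theorem pow_dvd_subst_sub_sum {a : R⟦X⟧} (ha : constantCoeff a = 0) (f : R⟦X⟧) (N : ℕ) :
    a ^ N ∣ f.subst a - ∑ i ∈ range N, C (coeff i f) * a ^ i := by
  have hs : HasSubst a := HasSubst.of_constantCoeff_zero' ha
  have htrunc : (f.subst a : R⟦X⟧) = a ^ N * (mk fun i ↦ coeff (i + N) f).subst a +
      ∑ i ∈ range N, C (coeff i f) * a ^ i := by
    conv_lhs => rw [eq_X_pow_mul_shift_add_trunc N f]
    rw [subst_add hs, subst_mul hs, subst_pow hs, subst_X hs, subst_coe hs,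
      Polynomial.aeval_def, eval₂_trunc_eq_sum_range]
    rfl
  rw [htrunc, add_sub_cancel_right]
  exact dvd_mul_right _ _

theorem catalanSeries_subst_eq {a : R⟦X⟧} (ha : constantCoeff a = 0) :
    ((catalanSeries.map (Nat.castRingHom R)).subst a : R⟦X⟧) =
      1 + a * ((catalanSeries.map (Nat.castRingHom R)).subst a) ^ 2 := by
  have hs : HasSubst a := HasSubst.of_constantCoeff_zero' ha
  have h := congrArg (fun f ↦ substAlgHom hs (f.map (Nat.castRingHom R)))
    catalanSeries_sq_mul_X_add_one
  simp only [map_add, map_mul, map_pow, map_X, map_one, substAlgHom_X, coe_substAlgHom] at h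
  linear_combination -h

theorem mk_mul_eq_of_rec {t : ℕ → R} (h0 : t 0 = 1) (h1 : t 1 = 1)
    (hrec : ∀ n, t (n + 2) + t n = t (n + 1) + ∑ p ∈ antidiagonal n, t p.1 * t p.2) :
    (X ^ 2 - X + 1) * mk t = 1 + X ^ 2 * (mk t) ^ 2 := by
  rw [show (X ^ 2 - X + 1) * mk t = X ^ 2 * mk t - X * mk t + mk t by ring]
  ext n
  match n with
  | 0 => simp [h0]
  | 1 => simp [coeff_X_pow_mul', h0, h1]
  | n + 2 =>
    rw [map_add, map_sub, map_add, coeff_X_pow_mul, coeff_succ_X_mul, coeff_X_pow_mul, coeff_one,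
      if_neg (by omega), sq, coeff_mul]
    simp only [coeff_mk, zero_add]
    linear_combination hrec n

theorem coeff_mul_subst_eq_coeff_mul_sum {a : R⟦X⟧} (ha : constantCoeff a = 0) (A f : R⟦X⟧)
    (N : ℕ) : coeff N (A * f.subst a) =
      coeff N (A * ∑ i ∈ range (N + 1), C (coeff i f) * a ^ i) := by
  refine coeff_eq_of_X_pow_dvd_sub ?_
  rw [← mul_sub]
  refine Dvd.dvd.mul_left (dvd_trans ?_ (pow_dvd_subst_sub_sum ha f (N + 1))) A
  exact pow_dvd_pow_of_dvd (X_dvd_iff.mpr ha) _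

theorem eq_inv_mul_catalanSeries_subst {k : Type*} [Field k] {T : k⟦X⟧}
    (hT : (X ^ 2 - X + 1) * T = 1 + X ^ 2 * T ^ 2) :
    T = (X ^ 2 - X + 1)⁻¹ *
      (catalanSeries.map (Nat.castRingHom k)).subst ((X * (X ^ 2 - X + 1)⁻¹) ^ 2) := by
  set Q : k⟦X⟧ := X ^ 2 - X + 1
  have hQ : Q * Q⁻¹ = 1 := PowerSeries.mul_inv_cancel _ (by simp [Q])
  have hu : constantCoeff ((X * Q⁻¹) ^ 2) = 0 := by simp
  have hW : Q * T = 1 + (X * Q⁻¹) ^ 2 * (Q * T) ^ 2 := by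
    linear_combination hT - X ^ 2 * T ^ 2 * (1 + Q * Q⁻¹) * hQ
  rw [← eq_of_eq_one_add_mul_sq hu hW (catalanSeries_subst_eq hu), ← mul_assoc, mul_comm Q⁻¹,
    hQ, one_mul]

end PowerSeries

namespace RNA

theorem X_sq_sub_X_add_one_mul_mk_card {R : Type*} [CommRing R] :
    (PowerSeries.X ^ 2 - PowerSeries.X + 1) *
        PowerSeries.mk (fun n ↦ (#(secondaryStructures n) : R)) =
      1 + PowerSeries.X ^ 2 * (PowerSeries.mk fun n ↦ (#(secondaryStructures n) : R)) ^ 2 :=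
  PowerSeries.mk_mul_eq_of_rec (by simp [secondaryStructures_of_le_one])
    (by simp [secondaryStructures_of_le_one])
    fun n ↦ by exact_mod_cast congrArg (Nat.cast (R := R)) (card_secondaryStructures_rec n)

end RNA

/-- As formal power series:
`∑_n ∑_{h ≤ n/2} T_{2,1}(n,h) z^n = (z²-z+1)⁻¹ ∑_n Cat(n) (z/(z²-z+1))^{2n}`,
stated coefficient-wise (for the coefficient of `z^N` only the finitely many
terms `n ≤ N` of the right-hand sum contribute, since `(z(z²-z+1)⁻¹)^{2n}` has
order `2n`). -/
theorem stmt15 : ∀ N : ℕ,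
    (PowerSeries.coeff (R := ℚ) N)
        (PowerSeries.mk fun n : ℕ => ∑ h ∈ Finset.range (n / 2 + 1), (T21 n h : ℚ))
      = (PowerSeries.coeff (R := ℚ) N)
        ((PowerSeries.X ^ 2 - PowerSeries.X + 1)⁻¹ *
          ∑ n ∈ Finset.range (N + 1),
            PowerSeries.C (R := ℚ) ((catalan n : ℚ)) *
              (PowerSeries.X * (PowerSeries.X ^ 2 - PowerSeries.X + 1)⁻¹) ^ (2 * n)) := by
  intro N
  simp_rw [PowerSeries.coeff_mk, ← Nat.cast_sum, RNA.sum_T21_eq_card_secondaryStructures]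
  rw [← PowerSeries.coeff_mk N fun n ↦ (#(RNA.secondaryStructures n) : ℚ),
    PowerSeries.eq_inv_mul_catalanSeries_subst RNA.X_sq_sub_X_add_one_mul_mk_card,
    PowerSeries.coeff_mul_subst_eq_coeff_mul_sum (by simp)]
  simp [pow_mul]
end
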